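/- arXiv:2604.27858 — 10 statements merged into one kernel-verified Lean document; each statement's English description precedes it below -/
import Mathlib

section
/- Let d ≥ 1 and let r ∈ ℝ^d be a vector with r_n > 0 for all n and Σ_{n=1}^d r_n = 1. Let 𝔲 be a nonempty subset of {1,…,d}, and define the error ε := d · Σ_{n∈𝔲} r_n and the length ℓ := √(Σ_{n=1}^d (ln(d·r_n))²). Then ε ≥ |𝔲| · exp(−ℓ/√|𝔲|) ≥ exp(−ℓ). In particular, e^ℓ · ε ≥ 1. -/
/-!
Write `d r n = exp x n` with `x n = log (d r n)`, so that `ℓ = ‖x‖₂`. By Jensen's inequality for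
`exp`, the error `∑_{n∈𝔲} exp x n` is at least `|𝔲| exp` of the mean of `x` over `𝔲`, and by
Cauchy–Schwarz that mean is at least `-ℓ / √|𝔲|`. The weaker bound `exp (-ℓ)` follows from
`√|𝔲| ≥ 1`.
-/

open Real Finset

namespace Finset

variable {ι : Type*}

theorem card_mul_exp_sum_div_card_le_sum_exp (s : Finset ι) (x : ι → ℝ) :
    #s * exp ((∑ i ∈ s, x i) / #s) ≤ ∑ i ∈ s, exp (x i) := by
  rcases s.eq_empty_or_nonempty with rfl | hs
  · simp
  have hk : (0 : ℝ) < #s := by exact_mod_cast hs.card_pos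
  have jensen := convexOn_exp.map_sum_le (t := s) (w := fun _ ↦ (#s : ℝ)⁻¹) (p := x)
    (fun _ _ ↦ by positivity) (by simp [hk.ne']) (fun _ _ ↦ Set.mem_univ _)
  simp only [smul_eq_mul, inv_mul_eq_div, ← sum_div] at jensen
  rwa [← le_div_iff₀' hk]

theorem neg_sqrt_card_mul_sqrt_sum_sq_le_sum {s t : Finset ι} (hst : s ⊆ t) (x : ι → ℝ) :
    -(√(#s : ℝ) * √(∑ i ∈ t, x i ^ 2)) ≤ ∑ i ∈ s, x i := by
  have cauchySchwarz := Real.sum_mul_le_sqrt_mul_sqrt s (fun _ ↦ 1) (fun i ↦ -x i)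
  simp only [one_mul, one_pow, sum_const, nsmul_eq_mul, mul_one, neg_sq, sum_neg_distrib]
    at cauchySchwarz
  have hsub : √(∑ i ∈ s, x i ^ 2) ≤ √(∑ i ∈ t, x i ^ 2) :=
    sqrt_le_sqrt (sum_le_sum_of_subset_of_nonneg hst fun _ _ _ ↦ sq_nonneg _)
  nlinarith [sqrt_nonneg (#s : ℝ)]

theorem card_mul_exp_neg_sqrt_sum_sq_div_sqrt_card_le_sum_exp {s t : Finset ι} (hst : s ⊆ t)
    (x : ι → ℝ) :
    #s * exp (-√(∑ i ∈ t, x i ^ 2) / √(#s : ℝ)) ≤ ∑ i ∈ s, exp (x i) := by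
  set L := √(∑ i ∈ t, x i ^ 2)
  have hk : (0 : ℝ) ≤ #s := by positivity
  have hexponent : -L / √(#s : ℝ) ≤ (∑ i ∈ s, x i) / #s := by
    calc -L / √(#s : ℝ) = -(√(#s : ℝ) * L) / #s := by
          rw [mul_comm, neg_div, neg_div, mul_div_assoc, sqrt_div_self, div_eq_mul_inv]
      _ ≤ (∑ i ∈ s, x i) / #s :=
          div_le_div_of_nonneg_right (neg_sqrt_card_mul_sqrt_sum_sq_le_sum hst x) hk
  calc (#s : ℝ) * exp (-L / √(#s : ℝ)) ≤ #s * exp ((∑ i ∈ s, x i) / #s) := by gcongr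
    _ ≤ ∑ i ∈ s, exp (x i) := card_mul_exp_sum_div_card_le_sum_exp s x

end Finset

theorem Real.exp_neg_le_mul_exp_neg_div_sqrt {L k : ℝ} (hL : 0 ≤ L) (hk : 1 ≤ k) :
    exp (-L) ≤ k * exp (-L / √k) := by
  have hsqrt : 1 ≤ √k := one_le_sqrt.mpr hk
  calc exp (-L) ≤ exp (-L / √k) := by
        gcongr
        rw [le_div_iff₀ (by linarith)]
        nlinarith
    _ ≤ k * exp (-L / √k) := le_mul_of_one_le_left (exp_nonneg _) hk

theorem error_complexity_tradeoff_classical_general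
    (d : ℕ) (r : Fin d → ℝ)
    (hr : ∀ n, 0 < r n)
    (𝔲 : Finset (Fin d)) (h𝔲 : 𝔲.Nonempty) :
    ((d : ℝ) * ∑ n ∈ 𝔲, r n ≥
      (𝔲.card : ℝ) *
        Real.exp (-(Real.sqrt (∑ n, (Real.log (d * r n)) ^ 2)) / Real.sqrt (𝔲.card))) ∧
    ((𝔲.card : ℝ) *
        Real.exp (-(Real.sqrt (∑ n, (Real.log (d * r n)) ^ 2)) / Real.sqrt (𝔲.card)) ≥
      Real.exp (-(Real.sqrt (∑ n, (Real.log (d * r n)) ^ 2)))) ∧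
    (Real.exp (Real.sqrt (∑ n, (Real.log (d * r n)) ^ 2)) *
      ((d : ℝ) * ∑ n ∈ 𝔲, r n) ≥ 1) := by
  set ℓ := √(∑ n, log (d * r n) ^ 2)
  have hd : (0 : ℝ) < d := by exact_mod_cast Fin.pos h𝔲.choose
  have herror : (d : ℝ) * ∑ n ∈ 𝔲, r n = ∑ n ∈ 𝔲, exp (log (d * r n)) := by
    rw [mul_sum]
    exact sum_congr rfl fun n _ ↦ (exp_log (mul_pos hd (hr n))).symm
  have hjensen : (#𝔲 : ℝ) * exp (-ℓ / √(#𝔲 : ℝ)) ≤ (d : ℝ) * ∑ n ∈ 𝔲, r n :=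
    herror ▸ card_mul_exp_neg_sqrt_sum_sq_div_sqrt_card_le_sum_exp (subset_univ 𝔲) _
  have hcard : exp (-ℓ) ≤ (#𝔲 : ℝ) * exp (-ℓ / √(#𝔲 : ℝ)) :=
    exp_neg_le_mul_exp_neg_div_sqrt (sqrt_nonneg _) (by exact_mod_cast h𝔲.card_pos)
  refine ⟨hjensen, hcard, ?_⟩
  calc 1 = exp ℓ * exp (-ℓ) := by rw [← exp_add, add_neg_cancel, exp_zero]
    _ ≤ exp ℓ * ((d : ℝ) * ∑ n ∈ 𝔲, r n) := by gcongr; exact hcard.trans hjensen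

/-- **Complexity–error trade-off, core inequality (classical case).**
If `r` is a strictly positive probability vector on `d` states, `𝔲` a nonempty set of
undesired states, `ε = d ∑_{n∈𝔲} r n` the reset error, and
`ℓ = √(∑ n, (log (d r n))²)` the unconstrained geodesic length, then
`ε ≥ |𝔲| exp(−ℓ/√|𝔲|) ≥ exp(−ℓ)`, and in particular `e^ℓ ε ≥ 1`. -/
theorem error_complexity_tradeoff_classical
    (d : ℕ) (hd : 1 ≤ d) (r : Fin d → ℝ)
    (hr : ∀ n, 0 < r n) (hsum : ∑ n, r n = 1)
    (𝔲 : Finset (Fin d)) (h𝔲 : 𝔲.Nonempty) :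
    ((d : ℝ) * ∑ n ∈ 𝔲, r n ≥
      (𝔲.card : ℝ) *
        Real.exp (-(Real.sqrt (∑ n, (Real.log (d * r n)) ^ 2)) / Real.sqrt (𝔲.card))) ∧
    ((𝔲.card : ℝ) *
        Real.exp (-(Real.sqrt (∑ n, (Real.log (d * r n)) ^ 2)) / Real.sqrt (𝔲.card)) ≥
      Real.exp (-(Real.sqrt (∑ n, (Real.log (d * r n)) ^ 2)))) ∧
    (Real.exp (Real.sqrt (∑ n, (Real.log (d * r n)) ^ 2)) *
      ((d : ℝ) * ∑ n ∈ 𝔲, r n) ≥ 1) :=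
  error_complexity_tradeoff_classical_general d r hr 𝔲 h𝔲
end

section
/- For m ≠ n in {1,2,3} and α, β ∈ [0,1], let P(m,n,α,β) denote the 3×3 real matrix that equals the identity except on rows and columns m, n, where it is given by the 2×2 block [[1−α, β],[α, 1−β]]. Let T be the 3×3 matrix with T_ii = 0 and T_ij = 1/2 for i ≠ j. Then T cannot be written as a finite product of matrices of the form P(m,n,α,β): for every finite list L of such primitive matrices, the product of L is not equal to T. -/
/-! The zeros of `offDiagHalf` sit exactly at the positions `(σ j, j)` of a permutation `σ`
(the identity), all other entries being positive. Suppose a product `P * N` of primitive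
operations has such a zero pattern, with `P = primitiveOp m n α β`. Rows `m` and `n` of `P * N`
are nonnegative mixtures of rows `m` and `n` of `N`, and each has a zero in a column where the
other is positive; this forces `α = β = 0` or `α = β = 1`, so `P` is the identity or the swap
of `m` and `n`. Then `N` is a row permutation of `P * N` and has the same kind of pattern, so by
induction the empty product would too. But the identity matrix has two zeros in each column. -/

open Matrix

/-- The primitive (two-state) stochastic operation acting nontrivially only on
states `m` and `n`, given by the 2×2 block `[[1−α, β],[α, 1−β]]` there and the
identity elsewhere. -/
noncomputable def primitiveOp (m n : Fin 3) (α β : ℝ) : Matrix (Fin 3) (Fin 3) ℝ :=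
  fun i j =>
    if i = m ∧ j = m then 1 - α
    else if i = n ∧ j = m then α
    else if i = m ∧ j = n then β
    else if i = n ∧ j = n then 1 - β
    else if i = j then 1 else 0

/-- The 3×3 stochastic matrix with `0` on the diagonal and `1/2` off the diagonal. -/
noncomputable def offDiagHalf : Matrix (Fin 3) (Fin 3) ℝ :=
  fun i j => if i = j then 0 else 1 / 2

def Matrix.HasPermZeroPattern {ι R : Type*} [Zero R] (M : Matrix ι ι R) (σ : Equiv.Perm ι) :
    Prop :=
  ∀ i j, M i j = 0 ↔ i = σ j

namespace Matrix.HasPermZeroPattern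

variable {ι R : Type*}

theorem of_submatrix [Zero R] {N : Matrix ι ι R} {τ σ : Equiv.Perm ι}
    (h : (N.submatrix τ id).HasPermZeroPattern σ) : N.HasPermZeroPattern (τ * σ) := by
  intro i j
  simpa [Equiv.symm_apply_eq] using h (τ.symm i) j

theorem of_swap_mul [Fintype ι] [DecidableEq ι] [Semiring R] {N : Matrix ι ι R} {a b : ι}
    {σ : Equiv.Perm ι} (h : (swap R a b * N).HasPermZeroPattern σ) :
    N.HasPermZeroPattern (Equiv.swap a b * σ) := by
  rw [swap, Equiv.Perm.permMatrix, PEquiv.toMatrix_toPEquiv_mul] at h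
  exact of_submatrix h

theorem not_one [Fintype ι] [DecidableEq ι] [Zero R] [One R] (hι : 2 < Fintype.card ι)
    (σ : Equiv.Perm ι) : ¬ (1 : Matrix ι ι R).HasPermZeroPattern σ := by
  obtain ⟨a, b, c, hab, hac, hbc⟩ := Fintype.two_lt_card_iff.mp hι
  intro h
  have hb : b = σ a := (h b a).mp (one_apply_ne' hab)
  have hc : c = σ a := (h c a).mp (one_apply_ne' hac)
  exact hbc (hb.trans hc.symm)

theorem apply_eq_zero [Zero R] {M : Matrix ι ι R} {σ : Equiv.Perm ι}
    (h : M.HasPermZeroPattern σ) (j : ι) : M (σ j) j = 0 :=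
  (h _ j).2 rfl

theorem pos_of_ne [Zero R] [PartialOrder R] {M : Matrix ι ι R} {σ : Equiv.Perm ι}
    (h : M.HasPermZeroPattern σ) (hM : ∀ i j, 0 ≤ M i j) {i j : ι} (hij : i ≠ σ j) :
    0 < M i j :=
  (hM i j).lt_of_ne fun h0 => hij ((h i j).1 h0.symm)

end Matrix.HasPermZeroPattern

theorem offDiagHalf_hasPermZeroPattern : offDiagHalf.HasPermZeroPattern 1 := by
  intro i j
  by_cases h : i = j <;> simp [offDiagHalf, h]

section primitiveOp

variable {m n : Fin 3} {α β : ℝ}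

theorem primitiveOp_mem_colStochastic (hmn : m ≠ n) (hα : α ∈ Set.Icc (0 : ℝ) 1)
    (hβ : β ∈ Set.Icc (0 : ℝ) 1) : primitiveOp m n α β ∈ colStochastic ℝ (Fin 3) := by
  obtain ⟨hα₀, hα₁⟩ := hα
  obtain ⟨hβ₀, hβ₁⟩ := hβ
  refine mem_colStochastic_iff_sum.mpr ⟨fun i j => ?_, fun j => ?_⟩
  · unfold primitiveOp
    split_ifs <;> linarith
  · fin_cases m <;> fin_cases n <;> fin_cases j <;> simp_all [primitiveOp, Fin.sum_univ_three]

theorem primitiveOp_zero_zero : primitiveOp m n 0 0 = 1 := by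
  ext i j
  rw [primitiveOp, Matrix.one_apply]
  split_ifs <;> grind

theorem primitiveOp_one_one (hmn : m ≠ n) : primitiveOp m n 1 1 = swap ℝ m n := by
  ext i j
  simp only [swap, Equiv.Perm.permMatrix, PEquiv.toMatrix_apply, Equiv.toPEquiv_apply,
    Option.mem_def, Option.some.injEq, Equiv.swap_apply_def, primitiveOp]
  split_ifs <;> grind

variable (N : Matrix (Fin 3) (Fin 3) ℝ)

theorem primitiveOp_mul_apply_left (hmn : m ≠ n) (j : Fin 3) :
    (primitiveOp m n α β * N) m j = (1 - α) * N m j + β * N n j := by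
  fin_cases m <;> fin_cases n <;> simp_all [primitiveOp, mul_apply, Fin.sum_univ_three] <;> ring

theorem primitiveOp_mul_apply_right (hmn : m ≠ n) (j : Fin 3) :
    (primitiveOp m n α β * N) n j = α * N m j + (1 - β) * N n j := by
  fin_cases m <;> fin_cases n <;> simp_all [primitiveOp, mul_apply, Fin.sum_univ_three] <;> ring

end primitiveOp

theorem eq_zero_zero_or_eq_one_one_of_mix {α β a b c d : ℝ} (hα : α ∈ Set.Icc (0 : ℝ) 1)
    (hβ : β ∈ Set.Icc (0 : ℝ) 1) (ha : 0 ≤ a) (hb : 0 ≤ b) (hc : 0 ≤ c) (hd : 0 ≤ d)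
    (hab : (1 - α) * a + β * b = 0) (hab' : 0 < α * a + (1 - β) * b)
    (hcd : α * c + (1 - β) * d = 0) (hcd' : 0 < (1 - α) * c + β * d) :
    α = 0 ∧ β = 0 ∨ α = 1 ∧ β = 1 := by
  obtain ⟨hα₀, hα₁⟩ := hα
  obtain ⟨hβ₀, hβ₁⟩ := hβ
  obtain ⟨h₁, h₂⟩ := (add_eq_zero_iff_of_nonneg (mul_nonneg (sub_nonneg.2 hα₁) ha)
    (mul_nonneg hβ₀ hb)).1 hab
  obtain ⟨h₃, h₄⟩ := (add_eq_zero_iff_of_nonneg (mul_nonneg hα₀ hc)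
    (mul_nonneg (sub_nonneg.2 hβ₁) hd)).1 hcd
  rcases hα₁.lt_or_eq with hα₁ | rfl
  · have ha0 : a = 0 := (mul_eq_zero.1 h₁).resolve_left (by linarith)
    have hb0 : b ≠ 0 := by rintro rfl; simp [ha0] at hab'
    have hβ0 : β = 0 := (mul_eq_zero.1 h₂).resolve_right hb0
    have hd0 : d = 0 := by simpa [hβ0] using h₄
    have hc0 : c ≠ 0 := by rintro rfl; simp [hd0] at hcd'
    exact .inl ⟨(mul_eq_zero.1 h₃).resolve_right hc0, hβ0⟩
  · have hc0 : c = 0 := by simpa using h₃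
    have hd0 : d ≠ 0 := by rintro rfl; simp [hc0] at hcd'
    exact .inr ⟨rfl, by linarith [(mul_eq_zero.1 h₄).resolve_right hd0]⟩

theorem primitiveOp_eq_one_or_swap_of_hasPermZeroPattern {m n : Fin 3} {α β : ℝ}
    (hmn : m ≠ n) (hα : α ∈ Set.Icc (0 : ℝ) 1) (hβ : β ∈ Set.Icc (0 : ℝ) 1)
    {N : Matrix (Fin 3) (Fin 3) ℝ} (hN : N ∈ colStochastic ℝ (Fin 3))
    {σ : Equiv.Perm (Fin 3)} (h : (primitiveOp m n α β * N).HasPermZeroPattern σ) :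
    primitiveOp m n α β = 1 ∨ primitiveOp m n α β = swap ℝ m n := by
  have hM := mul_mem (primitiveOp_mem_colStochastic hmn hα hβ) hN
  have hN₀ i j : 0 ≤ N i j := nonneg_of_mem_colStochastic hN
  have hM₀ i j : 0 ≤ (primitiveOp m n α β * N) i j := nonneg_of_mem_colStochastic hM
  obtain ⟨jm, rfl⟩ := σ.surjective m
  obtain ⟨jn, rfl⟩ := σ.surjective n
  have hmn' : σ jn ≠ σ jm := hmn.symm
  rcases eq_zero_zero_or_eq_one_one_of_mix hα hβ (hN₀ _ _) (hN₀ _ _) (hN₀ _ _) (hN₀ _ _)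
      (by rw [← primitiveOp_mul_apply_left N hmn]; exact h.apply_eq_zero jm)
      (by rw [← primitiveOp_mul_apply_right N hmn]; exact h.pos_of_ne hM₀ hmn')
      (by rw [← primitiveOp_mul_apply_right N hmn]; exact h.apply_eq_zero jn)
      (by rw [← primitiveOp_mul_apply_left N hmn]; exact h.pos_of_ne hM₀ hmn)
    with ⟨rfl, rfl⟩ | ⟨rfl, rfl⟩
  · exact .inl primitiveOp_zero_zero
  · exact .inr (primitiveOp_one_one hmn)

def IsPrimitiveOp (P : Matrix (Fin 3) (Fin 3) ℝ) : Prop :=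
  ∃ m n : Fin 3, ∃ α β : ℝ, m ≠ n ∧
    α ∈ Set.Icc (0 : ℝ) 1 ∧ β ∈ Set.Icc (0 : ℝ) 1 ∧ P = primitiveOp m n α β

theorem IsPrimitiveOp.mem_colStochastic {P : Matrix (Fin 3) (Fin 3) ℝ}
    (hP : IsPrimitiveOp P) : P ∈ colStochastic ℝ (Fin 3) := by
  obtain ⟨m, n, α, β, hmn, hα, hβ, rfl⟩ := hP
  exact primitiveOp_mem_colStochastic hmn hα hβ

theorem not_hasPermZeroPattern_prod_of_isPrimitiveOp {L : List (Matrix (Fin 3) (Fin 3) ℝ)}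
    (hL : ∀ P ∈ L, IsPrimitiveOp P) (σ : Equiv.Perm (Fin 3)) :
    ¬ L.prod.HasPermZeroPattern σ := by
  induction L generalizing σ with
  | nil => exact HasPermZeroPattern.not_one (by simp) σ
  | cons P L ih =>
    obtain ⟨m, n, α, β, hmn, hα, hβ, rfl⟩ := hL P List.mem_cons_self
    have hL' := fun Q hQ => hL Q (List.mem_cons_of_mem _ hQ)
    have hN := Submonoid.list_prod_mem _ fun Q hQ => (hL' Q hQ).mem_colStochastic
    intro h
    rw [List.prod_cons] at h
    rcases primitiveOp_eq_one_or_swap_of_hasPermZeroPattern hmn hα hβ hN h with hP | hP <;>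
      rw [hP] at h
    · exact ih hL' σ (by rwa [one_mul] at h)
    · exact ih hL' _ h.of_swap_mul

/-- **No-go for gate-type decompositions of stochastic maps.**
The matrix `offDiagHalf` cannot be written as a finite product of primitive
operations `primitiveOp m n α β` with `m ≠ n` and `α, β ∈ [0,1]`. -/
theorem no_primitive_decomposition
    (L : List (Matrix (Fin 3) (Fin 3) ℝ))
    (hL : ∀ P ∈ L, ∃ m n : Fin 3, ∃ α β : ℝ, m ≠ n ∧
        α ∈ Set.Icc (0:ℝ) 1 ∧ β ∈ Set.Icc (0:ℝ) 1 ∧ P = primitiveOp m n α β) :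
    L.prod ≠ offDiagHalf := fun h =>
  not_hasPermZeroPattern_prod_of_isPrimitiveOp hL 1 (h ▸ offDiagHalf_hasPermZeroPattern)
end

section
/- Let T be a d×d column-stochastic matrix such that the vector r^T := T·𝟙/d has all entries strictly positive, and let r : [0,1] → ℝ^d be a smooth path with r_n(t) > 0 and Σ_n r_n(t) = 1 for all t, r(0) = 𝟙/d, and r(1) = r^T. Then there exists a continuous path t ↦ T_t of d×d column-stochastic matrices with T_0 = 𝟙 (the identity matrix), T_1 = T, and T_t·𝟙/d = r(t) for all t ∈ [0,1]. -/
open Matrix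

/-- A `d × d` real matrix is column-stochastic if all its entries are nonnegative
and each column sums to `1`. -/
def IsColStochastic {d : ℕ} (T : Matrix (Fin d) (Fin d) ℝ) : Prop :=
  (∀ i j, 0 ≤ T i j) ∧ ∀ j, ∑ i, T i j = 1

/-- **Existence of a path of stochastic maps realizing a prescribed marginal path.**
Let `T` be a column-stochastic matrix whose normalized row-sum vector
`r^T = T·𝟙/d` is strictly positive, and let `r : [0,1] → ℝ^d` be a smooth path of
strictly positive probability vectors from `𝟙/d` to `r^T`.  Then there is a
continuous path of column-stochastic matrices from the identity to `T` whose
normalized row-sum vector at time `t` is `r t`. -/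
theorem exists_path_of_stochastic_maps
    (d : ℕ) (hd : 1 ≤ d) (T : Matrix (Fin d) (Fin d) ℝ)
    (hT : IsColStochastic T)
    (hrT : ∀ n, 0 < (∑ m, T n m) / d)
    (r : ℝ → Fin d → ℝ)
    (hsmooth : ContDiff ℝ (⊤ : ℕ∞) r)
    (hpos : ∀ t ∈ Set.Icc (0:ℝ) 1, ∀ n, 0 < r t n)
    (hsum : ∀ t ∈ Set.Icc (0:ℝ) 1, ∑ n, r t n = 1)
    (h0 : ∀ n, r 0 n = 1 / d)
    (h1 : ∀ n, r 1 n = (∑ m, T n m) / d) :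
    ∃ Tt : ℝ → Matrix (Fin d) (Fin d) ℝ,
      ContinuousOn Tt (Set.Icc (0:ℝ) 1) ∧
      Tt 0 = 1 ∧ Tt 1 = T ∧
      ∀ t ∈ Set.Icc (0:ℝ) 1,
        IsColStochastic (Tt t) ∧ ∀ n, (∑ m, Tt t n m) / d = r t n := by
  have hd0 : (0:ℝ) < d := by exact_mod_cast Nat.lt_of_lt_of_le Nat.zero_lt_one hd
  have hdne : (d:ℝ) ≠ 0 := ne_of_gt hd0
  set S : Fin d → ℝ := fun n => ∑ m, T n m with hSdef
  have hSpos : ∀ n, 0 < S n := by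
    intro n
    have : 0 < S n / d * d := mul_pos (hrT n) hd0
    rwa [div_mul_cancel₀ _ hdne] at this
  set g : ℝ → Fin d → ℝ := fun t n => ((1 - t) + t * S n) / d with hgdef
  have hgpos : ∀ t ∈ Set.Icc (0:ℝ) 1, ∀ n, 0 < g t n := by
    intro t ht n
    obtain ⟨ht0, ht1⟩ := ht
    have hS := hSpos n
    rcases eq_or_lt_of_le ht0 with h | h
    · simp [hgdef, ← h]
      positivity
    · have : 0 < (1 - t) + t * S n := by nlinarith
      exact div_pos this hd0
  set φ : ℝ → Fin d → ℝ := fun t n => 1 - r t n / g t n with hφdef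
  have hne : (Finset.univ : Finset (Fin d)).Nonempty := ⟨⟨0, hd⟩, Finset.mem_univ _⟩
  set s : ℝ → ℝ := fun t => max 0 (Finset.univ.sup' hne (φ t)) with hsdef
  have hs0 : ∀ t, 0 ≤ s t := fun t => le_max_left _ _
  have hφle : ∀ t, ∀ n, φ t n ≤ s t := fun t n =>
    le_trans (Finset.le_sup' (φ t) (Finset.mem_univ n)) (le_max_right _ _)
  have hs1 : ∀ t ∈ Set.Icc (0:ℝ) 1, s t ≤ 1 := by
    intro t ht
    apply max_le (by norm_num)
    apply Finset.sup'_le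
    intro n _
    have := div_pos (hpos t ht n) (hgpos t ht n)
    simp only [hφdef]
    linarith
  -- key inequality
  have hkey : ∀ t ∈ Set.Icc (0:ℝ) 1, ∀ n, (1 - s t) * g t n ≤ r t n := by
    intro t ht n
    have hg := hgpos t ht n
    have h := hφle t n
    have h2 : 1 - s t ≤ r t n / g t n := by simp only [hφdef] at h; linarith
    calc (1 - s t) * g t n ≤ r t n / g t n * g t n :=
          mul_le_mul_of_nonneg_right h2 hg.le
      _ = r t n := div_mul_cancel₀ _ (ne_of_gt hg)
  -- endpoint values of s
  have hg0 : ∀ n, g 0 n = 1 / d := by intro n; simp [hgdef]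
  have hg1 : ∀ n, g 1 n = S n / d := by intro n; simp [hgdef]
  have hφ0 : ∀ n, φ 0 n = 0 := by
    intro n
    have : r 0 n / g 0 n = 1 := by
      rw [hg0, h0]; exact div_self (one_div_ne_zero hdne)
    simp [hφdef, this]
  have hφ1 : ∀ n, φ 1 n = 0 := by
    intro n
    have : r 1 n / g 1 n = 1 := by
      rw [hg1, h1 n]
      exact div_self (ne_of_gt (hrT n))
    simp [hφdef, this]
  have hsz : ∀ t, (∀ n, φ t n = 0) → s t = 0 := by
    intro t h
    simp only [hsdef]
    have : Finset.univ.sup' hne (φ t) = 0 := by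
      apply le_antisymm
      · exact Finset.sup'_le _ _ fun n _ => le_of_eq (h n)
      · exact le_trans (le_of_eq (h ⟨0, hd⟩).symm) (Finset.le_sup' _ (Finset.mem_univ _))
    simp [this]
  have hs00 : s 0 = 0 := hsz 0 hφ0
  have hs11 : s 1 = 0 := hsz 1 hφ1
  -- the path
  refine ⟨fun t n m => (1 - s t) * ((1 - t) * (if n = m then (1:ℝ) else 0) + t * T n m)
      + (r t n - (1 - s t) * g t n), ?_, ?_, ?_, ?_⟩
  · -- continuity
    apply continuousOn_pi.2; intro n; apply continuousOn_pi.2; intro m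
    have hrc : ∀ k, ContinuousOn (fun t => r t k) (Set.Icc (0:ℝ) 1) := fun k =>
      ((continuous_apply k).comp hsmooth.continuous).continuousOn
    have hgc : ∀ k, ContinuousOn (fun t => g t k) (Set.Icc (0:ℝ) 1) := fun k => by
      apply ContinuousOn.div_const
      exact ((continuous_const.sub continuous_id).add
        (continuous_id.mul continuous_const)).continuousOn
    have hsc : ContinuousOn s (Set.Icc (0:ℝ) 1) := by
      apply ContinuousOn.sup continuousOn_const
      apply ContinuousOn.finset_sup'_apply hne
      intro k _
      exact continuousOn_const.sub ((hrc k).div (hgc k)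
        (fun t ht => ne_of_gt (hgpos t ht k)))
    have hAc : Continuous (fun t : ℝ =>
        (1 - t) * (if n = m then (1:ℝ) else 0) + t * T n m) :=
      ((continuous_const.sub continuous_id).mul continuous_const).add
        (continuous_id.mul continuous_const)
    apply ContinuousOn.add
    · exact (continuousOn_const.sub hsc).mul hAc.continuousOn
    · exact (hrc n).sub ((continuousOn_const.sub hsc).mul (hgc n))
  · -- Tt 0 = 1
    funext n m
    show (1 - s 0) * ((1 - 0) * (if n = m then (1:ℝ) else 0) + 0 * T n m)
        + (r 0 n - (1 - s 0) * g 0 n) = (1 : Matrix (Fin d) (Fin d) ℝ) n m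
    rw [hs00, hg0, h0, Matrix.one_apply]
    split <;> ring
  · -- Tt 1 = T
    funext n m
    show (1 - s 1) * ((1 - 1) * (if n = m then (1:ℝ) else 0) + 1 * T n m)
        + (r 1 n - (1 - s 1) * g 1 n) = T n m
    have hSn : S n = ∑ m, T n m := rfl
    rw [hs11, hg1, h1, hSn]
    ring
  · intro t ht
    have hrow : ∀ n, ∑ m, ((1 - s t) * ((1 - t) * (if n = m then (1:ℝ) else 0) + t * T n m)
        + (r t n - (1 - s t) * g t n)) = d * r t n := by
      intro n
      rw [Finset.sum_add_distrib, Finset.sum_const, ← Finset.mul_sum,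
        Finset.sum_add_distrib, ← Finset.mul_sum, ← Finset.mul_sum]
      have e1 : ∑ m, (if n = m then (1:ℝ) else 0) = 1 := by simp
      have e2 : ∑ m, T n m = S n := rfl
      rw [e1, e2]
      have : g t n * d = (1 - t) + t * S n := by
        rw [hgdef]; field_simp
      simp only [Finset.card_univ, Fintype.card_fin, nsmul_eq_mul]
      linear_combination (s t - 1) * this
    constructor
    · constructor
      · intro n m
        obtain ⟨ht0, ht1⟩ := ht
        have hTn := hT.1 n m
        have hAnn : 0 ≤ (1 - t) * (if n = m then (1:ℝ) else 0) + t * T n m := by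
          have := mul_nonneg ht0 hTn
          split <;> nlinarith
        have h1' := mul_nonneg
          (by linarith [hs1 t ⟨ht0, ht1⟩] : (0:ℝ) ≤ 1 - s t) hAnn
        have h2' : 0 ≤ r t n - (1 - s t) * g t n := by
          linarith [hkey t ⟨ht0, ht1⟩ n]
        show 0 ≤ (1 - s t) * ((1 - t) * (if n = m then (1:ℝ) else 0) + t * T n m)
            + (r t n - (1 - s t) * g t n)
        linarith
      · intro m
        have e1 : ∑ n, (if n = m then (1:ℝ) else 0) = 1 := by simp
        have e2 : ∑ n, T n m = 1 := hT.2 m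
        have e3 : ∑ n, r t n = 1 := hsum t ht
        have hSsum : ∑ n, S n = (d:ℝ) := by
          show ∑ n, ∑ m, T n m = (d:ℝ)
          exact Finset.sum_comm.trans (by simp [hT.2])
        have e4 : ∑ n, g t n = 1 := by
          show ∑ n, ((1 - t) + t * S n) / d = 1
          rw [← Finset.sum_div, Finset.sum_add_distrib, Finset.sum_const,
            Finset.card_univ, Fintype.card_fin, ← Finset.mul_sum, hSsum,
            nsmul_eq_mul]
          field_simp
          ring
        rw [Finset.sum_add_distrib, ← Finset.mul_sum, Finset.sum_add_distrib,
          ← Finset.mul_sum, ← Finset.mul_sum, e1, e2, Finset.sum_sub_distrib,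
          e3, ← Finset.mul_sum, e4]
        ring
    · intro n
      rw [hrow n, mul_comm, mul_div_assoc, div_self hdne, mul_one]
end

section
/- Let A be a d×d real matrix with strictly positive entries whose columns each sum to 1, and let r ∈ ℝ^d satisfy r_n > 0 for all n and Σ_n r_n = 1. Then there exists a unique pair of vectors u, v ∈ ℝ^d with Σ_n v_n = 0 such that the matrix T with entries T_{mn} = e^{u_m + v_n} A_{mn} satisfies T·𝟙 = d·r and Σ_m T_{mn} = 1 for every n (i.e., T is column-stochastic with normalized row-sum vector r). -/
/-!
Eliminating `v` through the column constraint `e^{v_n} ∑_m e^{u_m} A_{mn} = 1` turns the row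
constraint into the critical-point equation of the potential
`G(u) = ∑_n log ∑_m e^{u_m} A_{mn} - ∑_m p_m u_m` with `p = d r`
(this is `F` minimised over `v`). `G` is invariant under `u ↦ u + c` and bounded below by
`const + p_k (max u - u_k)`, so it attains its minimum on a compact box; the normalisation
`∑ v = 0` then only fixes the constant `c`.

For uniqueness, write `x_{mn} = u_m + v_n` for two solutions `x, x'`: because both have the same
marginals, `∑ (e^{x_{mn}} - e^{x'_{mn}}) (x_{mn} - x'_{mn}) A_{mn} = 0`, while every term is
nonnegative and positive unless `x_{mn} = x'_{mn}`.
-/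

open Real Finset

namespace Sinkhorn

lemma exp_sub_exp_mul_sub_pos {x y : ℝ} (h : x ≠ y) : 0 < (exp x - exp y) * (x - y) := by
  rcases h.lt_or_gt with h | h
  · exact mul_pos_of_neg_of_neg (sub_neg.2 (exp_lt_exp.2 h)) (sub_neg.2 h)
  · exact mul_pos (sub_pos.2 (exp_lt_exp.2 h)) (sub_pos.2 h)

lemma exp_sub_exp_mul_sub_nonneg (x y : ℝ) : 0 ≤ (exp x - exp y) * (x - y) := by
  rcases eq_or_ne x y with rfl | h
  · simp
  · exact (exp_sub_exp_mul_sub_pos h).le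

lemma eq_and_eq_of_add_eq_add {ι κ : Type*} [Nonempty ι] [Fintype κ] [Nonempty κ]
    {u u' : ι → ℝ} {v v' : κ → ℝ}
    (h : ∀ m n, u m + v n = u' m + v' n) (hv : ∑ n, v n = ∑ n, v' n) : u = u' ∧ v = v' := by
  have hu : u = u' := by
    funext m
    have hsum : ∑ n, (u m + v n) = ∑ n, (u' m + v' n) := sum_congr rfl fun n _ => h m n
    rw [sum_add_distrib, sum_add_distrib, hv, sum_const, sum_const] at hsum
    exact smul_right_injective ℝ univ_nonempty.card_pos.ne' (add_right_cancel hsum)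
  obtain ⟨m⟩ := ‹Nonempty ι›
  exact ⟨hu, funext fun n => add_left_cancel (hu ▸ h m n)⟩

variable {ι κ : Type*} [Fintype ι] {A : Matrix ι κ ℝ}

section

variable [Fintype κ]

theorem add_eq_add_of_scaled_sums_eq (hA : ∀ m n, 0 < A m n)
    {u u' : ι → ℝ} {v v' : κ → ℝ}
    (hrow : ∀ m, ∑ n, exp (u m + v n) * A m n = ∑ n, exp (u' m + v' n) * A m n)
    (hcol : ∀ n, ∑ m, exp (u m + v n) * A m n = ∑ m, exp (u' m + v' n) * A m n)
    (m : ι) (n : κ) : u m + v n = u' m + v' n := by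
  set E : ι → κ → ℝ := fun m n => exp (u m + v n) * A m n - exp (u' m + v' n) * A m n
  have hsplit : ∀ m n, (exp (u m + v n) - exp (u' m + v' n)) * (u m + v n - (u' m + v' n)) * A m n
      = (u m - u' m) * E m n + (v n - v' n) * E m n := fun m n => by simp only [E]; ring
  have hzero : ∑ m, ∑ n,
      (exp (u m + v n) - exp (u' m + v' n)) * (u m + v n - (u' m + v' n)) * A m n = 0 := by
    simp_rw [hsplit, sum_add_distrib, ← mul_sum]
    rw [sum_comm (f := fun m n => (v n - v' n) * E m n)]
    simp_rw [← mul_sum, E, sum_sub_distrib, hrow, hcol, sub_self, mul_zero, sum_const_zero,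
      add_zero]
  by_contra hne
  refine (sum_pos' (fun m _ => sum_nonneg fun n _ => ?_)
    ⟨m, mem_univ m, sum_pos' (fun n _ => ?_) ⟨n, mem_univ n, ?_⟩⟩).ne' hzero
  · exact mul_nonneg (exp_sub_exp_mul_sub_nonneg _ _) (hA _ _).le
  · exact mul_nonneg (exp_sub_exp_mul_sub_nonneg _ _) (hA _ _).le
  · exact mul_pos (exp_sub_exp_mul_sub_pos hne) (hA m n)

end

noncomputable def colSum (A : Matrix ι κ ℝ) (u : ι → ℝ) (n : κ) : ℝ :=
  ∑ m, exp (u m) * A m n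

lemma colSum_pos [Nonempty ι] (hA : ∀ m n, 0 < A m n) (u : ι → ℝ) (n : κ) :
    0 < colSum A u n :=
  sum_pos (fun m _ => mul_pos (exp_pos _) (hA m n)) univ_nonempty

lemma colSum_add_const (u : ι → ℝ) (c : ℝ) (n : κ) :
    colSum A (fun m => u m + c) n = exp c * colSum A u n := by
  simp only [colSum, exp_add, mul_sum]
  exact sum_congr rfl fun m _ => by ring

variable [Fintype κ]

noncomputable def potential (A : Matrix ι κ ℝ) (p : ι → ℝ) (u : ι → ℝ) : ℝ :=
  ∑ n, log (colSum A u n) - ∑ m, p m * u m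

variable {p : ι → ℝ}

lemma potential_add_const [Nonempty ι] (hA : ∀ m n, 0 < A m n)
    (hp : ∑ m, p m = Fintype.card κ) (u : ι → ℝ) (c : ℝ) :
    potential A p (fun m => u m + c) = potential A p u := by
  simp only [potential, colSum_add_const, log_mul (exp_pos c).ne' (colSum_pos hA u _).ne', log_exp,
    sum_add_distrib, mul_add, ← sum_mul, hp, sum_const, card_univ, nsmul_eq_mul]
  ring

lemma le_potential {a : ℝ} (ha0 : 0 < a) (ha : ∀ m n, a ≤ A m n) (hp : ∀ m, 0 ≤ p m)
    (hpsum : ∑ m, p m = Fintype.card κ) {u : ι → ℝ} {m : ι} (hm : ∀ j, u j ≤ u m)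
    (k : ι) :
    Fintype.card κ * log a + p k * (u m - u k) ≤ potential A p u := by
  have hcol : ∀ n, log a + u m ≤ log (colSum A u n) := fun n => by
    rw [← log_exp (u m), ← log_mul ha0.ne' (exp_pos _).ne']
    refine log_le_log (by positivity) ?_
    calc a * exp (u m) ≤ exp (u m) * A m n := by rw [mul_comm]; gcongr; exact ha m n
      _ ≤ colSum A u n := single_le_sum (f := fun j => exp (u j) * A j n)
          (fun j _ => mul_nonneg (exp_pos _).le (ha0.le.trans (ha j n))) (mem_univ m)
  have hk : p k * (u m - u k) ≤ ∑ j, p j * (u m - u j) :=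
    single_le_sum (f := fun j => p j * (u m - u j))
      (fun j _ => mul_nonneg (hp j) (sub_nonneg.2 (hm j))) (mem_univ k)
  calc Fintype.card κ * log a + p k * (u m - u k)
      ≤ ∑ n : κ, (log a + u m) - ∑ j, p j * u j := by
        simp only [mul_sub, sum_sub_distrib, ← sum_mul, hpsum, sum_const, card_univ,
          nsmul_eq_mul] at hk ⊢
        linarith
    _ ≤ potential A p u := by unfold potential; gcongr with n; exact hcol n

lemma continuous_potential [Nonempty ι] (hA : ∀ m n, 0 < A m n) : Continuous (potential A p) :=
  (continuous_finsetSum _ fun n _ =>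
    Continuous.log (by unfold colSum; fun_prop) fun u => (colSum_pos hA u n).ne').sub
    (by fun_prop)

lemma exists_forall_potential_le [Nonempty ι] (hA : ∀ m n, 0 < A m n) (hp : ∀ m, 0 < p m)
    (hpsum : ∑ m, p m = Fintype.card κ) :
    ∃ u, ∀ u', potential A p u ≤ potential A p u' := by
  obtain ⟨a, ha0, ha⟩ : ∃ a, 0 < a ∧ ∀ m n, a ≤ A m n := by
    rcases isEmpty_or_nonempty κ with hκ | hκ
    · exact ⟨1, one_pos, fun m n => isEmptyElim n⟩
    · obtain ⟨⟨m₀, n₀⟩, h⟩ := Finite.exists_min fun q : ι × κ => A q.1 q.2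
      exact ⟨_, hA m₀ n₀, fun m n => h (m, n)⟩
  set B : ι → ℝ := fun k => (potential A p 0 - Fintype.card κ * log a) / p k
  set K : Set (ι → ℝ) := Set.univ.pi fun k => Set.Icc (-B k) 0
  have hshift : ∀ u, potential A p u ≤ potential A p 0 →
      ∃ w ∈ K, potential A p w = potential A p u := by
    intro u hu
    obtain ⟨m, hm⟩ := Finite.exists_max u
    refine ⟨fun j => u j + -u m, fun k _ => ⟨?_, by linarith [hm k]⟩,
      potential_add_const hA hpsum u _⟩
    have hk := le_potential ha0 ha (fun j => (hp j).le) hpsum hm k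
    have : u m - u k ≤ B k := (le_div_iff₀ (hp k)).2 (by linarith)
    linarith
  obtain ⟨w₀, hw₀K, -⟩ := hshift 0 le_rfl
  obtain ⟨u₀, -, hmin⟩ := (isCompact_univ_pi fun k => isCompact_Icc).exists_isMinOn
    ⟨w₀, hw₀K⟩ (continuous_potential hA).continuousOn
  refine ⟨u₀, fun u => ?_⟩
  rcases le_or_gt (potential A p u) (potential A p 0) with hu | hu
  · obtain ⟨w, hwK, hw⟩ := hshift u hu
    exact (isMinOn_iff.1 hmin w hwK).trans_eq hw
  · obtain ⟨w, hwK, hw⟩ := hshift 0 le_rfl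
    exact ((isMinOn_iff.1 hmin w hwK).trans_eq hw).trans hu.le

lemma hasDerivAt_potential_add_smul [Nonempty ι] (hA : ∀ m n, 0 < A m n) (u w : ι → ℝ) :
    HasDerivAt (fun t : ℝ => potential A p (u + t • w))
      (∑ n, (∑ m, w m * (exp (u m) * A m n)) / colSum A u n - ∑ m, p m * w m) 0 := by
  have hcol : ∀ n, HasDerivAt (fun t : ℝ => colSum A (u + t • w) n)
      (∑ m, w m * (exp (u m) * A m n)) 0 := fun n => by
    refine HasDerivAt.fun_sum fun m _ => ?_
    have := ((((hasDerivAt_id (0 : ℝ)).mul_const (w m)).const_add (u m)).exp).mul_const (A m n)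
    simpa [mul_comm, mul_assoc, mul_left_comm] using this
  refine (HasDerivAt.fun_sum fun n _ => ?_).sub (HasDerivAt.fun_sum fun m _ => ?_)
  · simpa using (hcol n).log (by simpa using (colSum_pos hA u n).ne')
  · simpa using ((hasDerivAt_id (0 : ℝ)).mul_const (w m)).const_add (u m) |>.const_mul (p m)

lemma sum_div_colSum_eq_of_forall_potential_le [Nonempty ι] (hA : ∀ m n, 0 < A m n)
    {u : ι → ℝ} (hu : ∀ u', potential A p u ≤ potential A p u') (m : ι) :
    ∑ n, exp (u m) * A m n / colSum A u n = p m := by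
  classical
  have hmin : IsLocalMin (fun t : ℝ => potential A p (u + t • Pi.single m 1)) 0 :=
    .of_forall fun t => by simpa using hu _
  have h := hmin.hasDerivAt_eq_zero (hasDerivAt_potential_add_smul hA u (Pi.single m 1))
  simp only [Pi.single_apply, ite_mul, one_mul, zero_mul, mul_ite, mul_one, mul_zero,
    sum_ite_eq', mem_univ, if_true] at h
  linarith

theorem exists_scaling [Nonempty ι] (hA : ∀ m n, 0 < A m n) (hp : ∀ m, 0 < p m)
    (hpsum : ∑ m, p m = Fintype.card κ) :
    ∃ (u : ι → ℝ) (v : κ → ℝ), (∀ m, ∑ n, exp (u m + v n) * A m n = p m) ∧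
      (∀ n, ∑ m, exp (u m + v n) * A m n = 1) := by
  obtain ⟨u, hu⟩ := exists_forall_potential_le hA hp hpsum
  have hT : ∀ m n,
      exp (u m + -log (colSum A u n)) * A m n = exp (u m) * A m n / colSum A u n :=
    fun m n => by rw [exp_add, exp_neg, exp_log (colSum_pos hA u n)]; ring
  refine ⟨u, fun n => -log (colSum A u n), fun m => ?_, fun n => ?_⟩
  · simp only [hT]
    exact sum_div_colSum_eq_of_forall_potential_le hA hu m
  · simp only [hT, ← sum_div]
    exact div_self (colSum_pos hA u n).ne'

end Sinkhorn

theorem sinkhorn_scaling_exists_unique_general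
    (d : ℕ) (hd : 1 ≤ d) (A : Matrix (Fin d) (Fin d) ℝ)
    (hApos : ∀ m n, 0 < A m n)
    (r : Fin d → ℝ) (hr : ∀ n, 0 < r n) (hrsum : ∑ n, r n = 1) :
    ∃! uv : (Fin d → ℝ) × (Fin d → ℝ),
      (∑ n, uv.2 n = 0) ∧
      (∀ m, ∑ n, Real.exp (uv.1 m + uv.2 n) * A m n = d * r m) ∧
      (∀ n, ∑ m, Real.exp (uv.1 m + uv.2 n) * A m n = 1) := by
  have : NeZero d := ⟨by omega⟩
  have hd0 : (d : ℝ) ≠ 0 := NeZero.ne _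
  obtain ⟨u, v, hrow, hcol⟩ := Sinkhorn.exists_scaling (A := A) (p := fun m => d * r m) hApos
    (fun m => mul_pos (by positivity) (hr m))
    (by rw [← mul_sum, hrsum, mul_one, Fintype.card_fin])
  set c := (∑ n, v n) / d
  refine existsUnique_of_exists_of_unique
    ⟨(fun m => u m + c, fun n => v n - c), ?_, ?_, ?_⟩ ?_
  · simp [sum_sub_distrib, c, mul_div_cancel₀ _ hd0]
  · simpa only [add_add_sub_cancel] using hrow
  · simpa only [add_add_sub_cancel] using hcol
  · rintro ⟨u₁, v₁⟩ ⟨u₂, v₂⟩ ⟨hv₁, hrow₁, hcol₁⟩ ⟨hv₂, hrow₂, hcol₂⟩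
    obtain ⟨rfl, rfl⟩ := Sinkhorn.eq_and_eq_of_add_eq_add
      (Sinkhorn.add_eq_add_of_scaled_sums_eq hApos (fun m => (hrow₁ m).trans (hrow₂ m).symm)
        (fun n => (hcol₁ n).trans (hcol₂ n).symm)) (hv₁.trans hv₂.symm)
    rfl

/-- **Generalized Sinkhorn scaling of a positive stochastic matrix.**
If `A` is a strictly positive column-stochastic matrix and `r` a strictly positive
probability vector, then there is a unique pair of vectors `(u, v)` with
`∑ n, v n = 0` such that `T m n = e^{u m + v n} A m n` is column-stochastic with
row sums `T·𝟙 = d·r`. -/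
theorem sinkhorn_scaling_exists_unique
    (d : ℕ) (hd : 1 ≤ d) (A : Matrix (Fin d) (Fin d) ℝ)
    (hApos : ∀ m n, 0 < A m n)
    (hAcol : ∀ n, ∑ m, A m n = 1)
    (r : Fin d → ℝ) (hr : ∀ n, 0 < r n) (hrsum : ∑ n, r n = 1) :
    ∃! uv : (Fin d → ℝ) × (Fin d → ℝ),
      (∑ n, uv.2 n = 0) ∧
      (∀ m, ∑ n, Real.exp (uv.1 m + uv.2 n) * A m n = d * r m) ∧
      (∀ n, ∑ m, Real.exp (uv.1 m + uv.2 n) * A m n = 1) :=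
  sinkhorn_scaling_exists_unique_general d hd A hApos r hr hrsum
end

section
/- Let A be a d×d real matrix with nonnegative entries whose columns each sum to 1. Suppose u, v, ũ, ṽ ∈ ℝ^d are such that the matrices T and T̃ with entries T_{mn} = e^{u_m+v_n}A_{mn} and T̃_{mn} = e^{ũ_m+ṽ_n}A_{mn} satisfy T·𝟙 = T̃·𝟙 and Σ_m T_{mn} = Σ_m T̃_{mn} = 1 for every n. Then T = T̃. -/
open Matrix Real

/-! With `f = u - u'` and `g = v - v'` we have `T m n = exp (f m + g n) * T' m n`. Pairing
`T - T'` with `f m + g n` gives `0` because `T` and `T'` have the same row and column sums, while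
every term of the pairing is `≥ 0` because `exp` is increasing. Hence every term vanishes, which forces `T m n = T' m n`. -/

theorem Real.exp_sub_one_mul_self_nonneg (x : ℝ) : 0 ≤ (exp x - 1) * x := by
  rcases le_total 0 x with hx | hx
  · exact mul_nonneg (sub_nonneg.2 (one_le_exp hx)) hx
  · exact mul_nonneg_of_nonpos_of_nonpos (sub_nonpos.2 (exp_le_one_iff.2 hx)) hx

namespace Matrix

variable {ι κ R : Type*} [Fintype ι] [Fintype κ]

theorem sum_sub_mul_add_eq_zero_of_sums_eq [CommRing R] {P Q : Matrix ι κ R}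
    (hrow : ∀ i, ∑ j, P i j = ∑ j, Q i j) (hcol : ∀ j, ∑ i, P i j = ∑ i, Q i j)
    (f : ι → R) (g : κ → R) :
    ∑ i, ∑ j, (P i j - Q i j) * (f i + g j) = 0 := by
  have hf : ∑ i, ∑ j, (P i j - Q i j) * f i = 0 :=
    Finset.sum_eq_zero fun i _ => by
      rw [← Finset.sum_mul, Finset.sum_sub_distrib, hrow i, sub_self, zero_mul]
  have hg : ∑ j, ∑ i, (P i j - Q i j) * g j = 0 :=
    Finset.sum_eq_zero fun j _ => by
      rw [← Finset.sum_mul, Finset.sum_sub_distrib, hcol j, sub_self, zero_mul]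
  simp only [mul_add, Finset.sum_add_distrib, hf, Finset.sum_comm (γ := ι), hg, add_zero]

theorem eq_of_exp_scaling_of_sums_eq {P Q : Matrix ι κ ℝ} {f : ι → ℝ} {g : κ → ℝ}
    (hQ : ∀ i j, 0 ≤ Q i j) (hPQ : ∀ i j, P i j = exp (f i + g j) * Q i j)
    (hrow : ∀ i, ∑ j, P i j = ∑ j, Q i j) (hcol : ∀ j, ∑ i, P i j = ∑ i, Q i j) :
    P = Q := by
  have hterm : ∀ i j,
      (P i j - Q i j) * (f i + g j) = Q i j * ((exp (f i + g j) - 1) * (f i + g j)) :=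
    fun i j => by rw [hPQ]; ring
  have hnonneg : ∀ i j, 0 ≤ (P i j - Q i j) * (f i + g j) := fun i j => by
    rw [hterm]; exact mul_nonneg (hQ i j) (exp_sub_one_mul_self_nonneg _)
  have hzero : ∀ i j, (P i j - Q i j) * (f i + g j) = 0 := fun i j => by
    have hsum := sum_sub_mul_add_eq_zero_of_sums_eq hrow hcol f g
    rw [Fintype.sum_eq_zero_iff_of_nonneg fun i => Fintype.sum_nonneg (hnonneg i)] at hsum
    exact congrFun ((Fintype.sum_eq_zero_iff_of_nonneg (hnonneg i)).1 (congrFun hsum i)) j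
  ext i j
  rcases mul_eq_zero.1 (hzero i j) with h | h
  · exact sub_eq_zero.1 h
  · rw [hPQ, h, exp_zero, one_mul]

end Matrix

theorem double_scaling_unique_general
    (d : ℕ) (A : Matrix (Fin d) (Fin d) ℝ)
    (hA : ∀ m n, 0 ≤ A m n)
    (u v u' v' : Fin d → ℝ)
    (T T' : Matrix (Fin d) (Fin d) ℝ)
    (hT : ∀ m n, T m n = Real.exp (u m + v n) * A m n)
    (hT' : ∀ m n, T' m n = Real.exp (u' m + v' n) * A m n)
    (hrow : ∀ m, ∑ n, T m n = ∑ n, T' m n)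
    (hcolT : ∀ n, ∑ m, T m n = 1)
    (hcolT' : ∀ n, ∑ m, T' m n = 1) :
    T = T' := by
  refine eq_of_exp_scaling_of_sums_eq (f := u - u') (g := v - v')
    (fun m n => ?_) (fun m n => ?_) hrow (fun n => (hcolT n).trans (hcolT' n).symm)
  · rw [hT']; exact mul_nonneg (exp_pos _).le (hA m n)
  · rw [hT, hT', ← mul_assoc, ← exp_add, Pi.sub_apply, Pi.sub_apply]
    congr 2; ring

/-- **Uniqueness of double scalings of a stochastic matrix with given marginals.**
Let `A` be a column-stochastic matrix (nonnegative entries, columns summing to 1).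
If two double-scaled matrices `T m n = e^{u m + v n} A m n` and
`T' m n = e^{u' m + v' n} A m n` have the same row sums and both have all column
sums equal to `1`, then `T = T'`. -/
theorem double_scaling_unique
    (d : ℕ) (A : Matrix (Fin d) (Fin d) ℝ)
    (hA : ∀ m n, 0 ≤ A m n) (hAcol : ∀ n, ∑ m, A m n = 1)
    (u v u' v' : Fin d → ℝ)
    (T T' : Matrix (Fin d) (Fin d) ℝ)
    (hT : ∀ m n, T m n = Real.exp (u m + v n) * A m n)
    (hT' : ∀ m n, T' m n = Real.exp (u' m + v' n) * A m n)
    (hrow : ∀ m, ∑ n, T m n = ∑ n, T' m n)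
    (hcolT : ∀ n, ∑ m, T m n = 1)
    (hcolT' : ∀ n, ∑ m, T' m n = 1) :
    T = T' :=
  double_scaling_unique_general d A hA u v u' v' T T' hT hT' hrow hcolT hcolT'
end

section
/- Let A and B be positive-definite Hermitian n×n complex matrices, let H be the Hermitian matrix with A^{−1/2} B A^{−1/2} = exp(H), and define O(t) = A^{1/2} exp(tH) A^{1/2} for t ∈ [0,1]. Then O(0) = A, O(1) = B, each O(t) is positive-definite Hermitian, O is differentiable, and for every t ∈ [0,1] one has tr(O(t)^{−1} O'(t) O(t)^{−1} O'(t)) = tr(H²). -/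
/-!
Write `S = A^{1/2}`. Each `O t = S exp(tH) S` is a congruence of the positive-definite matrix
`exp(tH)`, and `O' t = S exp(tH) H S`, so `(O t)⁻¹ O' t = S⁻¹ H S` is similar to `H` for every `t`;
hence `tr((O⁻¹ O')²) = tr(H²)`.
-/

open Matrix NormedSpace
open scoped ComplexOrder

attribute [local instance] Matrix.frobeniusNormedAddCommGroup Matrix.frobeniusNormedSpace

/-- The square root of a positive semidefinite matrix, as defined in Mathlib (Dec 2024). -/
noncomputable def Matrix.PosSemidef.sqrt {n : Type*} [Fintype n] [DecidableEq n] {𝕜 : Type*}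
    [RCLike 𝕜] {A : Matrix n n 𝕜} (hA : A.PosSemidef) : Matrix n n 𝕜 :=
  hA.1.eigenvectorUnitary.1 * diagonal ((↑) ∘ Real.sqrt ∘ hA.1.eigenvalues) *
  (star hA.1.eigenvectorUnitary : Matrix n n 𝕜)

namespace Matrix

variable {m 𝕜 : Type*} [Fintype m] [DecidableEq m] [RCLike 𝕜]

theorem PosSemidef.sqrt_mul_self {A : Matrix m m 𝕜} (hA : A.PosSemidef) :
    hA.sqrt * hA.sqrt = A := by
  set U := (hA.1.eigenvectorUnitary : Matrix m m 𝕜)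
  set D := (diagonal ((↑) ∘ Real.sqrt ∘ hA.1.eigenvalues) : Matrix m m 𝕜)
  have hU : star U * U = 1 := Unitary.coe_star_mul_self _
  have hD : D * D = diagonal ((↑) ∘ hA.1.eigenvalues) := by
    rw [diagonal_mul_diagonal]
    congr 1
    funext i
    simp only [Function.comp_apply, ← RCLike.ofReal_mul,
      Real.mul_self_sqrt (hA.eigenvalues_nonneg i)]
  calc hA.sqrt * hA.sqrt = U * (D * (star U * U) * D) * star U := by
        simp only [PosSemidef.sqrt, Matrix.mul_assoc]; rfl
    _ = A := by
        rw [hU, Matrix.mul_one, hD]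
        conv_rhs => rw [hA.1.spectral_theorem, Unitary.conjStarAlgAut_apply]

theorem PosSemidef.isHermitian_sqrt {A : Matrix m m 𝕜} (hA : A.PosSemidef) :
    hA.sqrt.IsHermitian := by
  have hD : (diagonal ((↑) ∘ Real.sqrt ∘ hA.1.eigenvalues) : Matrix m m 𝕜).IsHermitian :=
    isHermitian_diagonal_iff.2 fun i => by simp [IsSelfAdjoint, RCLike.conj_ofReal]
  simpa [PosSemidef.sqrt, star_eq_conjTranspose] using
    isHermitian_mul_mul_conjTranspose (hA.1.eigenvectorUnitary : Matrix m m 𝕜) hD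

theorem PosDef.isUnit_sqrt {A : Matrix m m 𝕜} (hA : A.PosDef) : IsUnit hA.posSemidef.sqrt :=
  isUnit_of_mul_isUnit_left (hA.posSemidef.sqrt_mul_self ▸ hA.isUnit)

theorem IsHermitian.posDef_exp {H : Matrix m m 𝕜} (hH : H.IsHermitian) :
    (NormedSpace.exp H).PosDef := by
  set F := NormedSpace.exp ((2⁻¹ : ℝ) • H)
  have hF : F.IsHermitian := (hH.smul (IsSelfAdjoint.all _)).exp
  have hsq : NormedSpace.exp H = Fᴴ * F := by
    rw [hF.eq, ← exp_add_of_commute _ _ (Commute.refl _), ← add_smul]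
    norm_num
  rw [hsq]
  exact PosDef.conjTranspose_mul_self F (mulVec_injective_iff_isUnit.2 (isUnit_exp _))

theorem trace_inv_mul_mul_inv_mul_eq_trace_mul_self {α : Type*} [CommRing α] {S E : Matrix m m α}
    (H : Matrix m m α) (hS : IsUnit S) (hE : IsUnit E) :
    trace ((S * E * S)⁻¹ * (S * (E * H) * S) * (S * E * S)⁻¹ * (S * (E * H) * S)) =
      trace (H * H) := by
  have hSdet := (isUnit_iff_isUnit_det S).1 hS
  have hEdet := (isUnit_iff_isUnit_det E).1 hE
  have hconj : (S * E * S)⁻¹ * (S * (E * H) * S) = S⁻¹ * H * S := by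
    simp only [mul_inv_rev, Matrix.mul_assoc, nonsing_inv_mul_cancel_left _ _ hSdet,
      nonsing_inv_mul_cancel_left _ _ hEdet]
  calc _ = trace ((S * E * S)⁻¹ * (S * (E * H) * S) * ((S * E * S)⁻¹ * (S * (E * H) * S))) := by
        simp only [Matrix.mul_assoc]
    _ = trace (S⁻¹ * (H * H) * S) := by
        rw [hconj]
        simp only [Matrix.mul_assoc, mul_nonsing_inv_cancel_left _ _ hSdet]
    _ = trace (H * H) := trace_conj' hS _

section
attribute [local instance] frobeniusNormedRing frobeniusNormedAlgebra

theorem hasDerivAt_mul_exp_ofReal_smul_mul (P H Q : Matrix m m ℂ) (t : ℝ) :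
    HasDerivAt (fun u : ℝ => P * exp ((u : ℂ) • H) * Q) (P * (exp ((t : ℂ) • H) * H) * Q) t :=
  (((hasDerivAt_exp_smul_const H (t : ℂ)).const_mul P).mul_const Q).scomp t
    Complex.ofRealCLM.hasDerivAt |>.congr_deriv (one_smul _ _)

end

end Matrix

theorem geodesic_path_constant_speed_general
    (n : ℕ) (A B : Matrix (Fin n) (Fin n) ℂ)
    (hA : A.PosDef)
    (H : Matrix (Fin n) (Fin n) ℂ) (hH : H.IsHermitian)
    (hHlog : hA.posSemidef.sqrt⁻¹ * B * hA.posSemidef.sqrt⁻¹ = exp H)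
    (O : ℝ → Matrix (Fin n) (Fin n) ℂ)
    (hO : O = fun t : ℝ => hA.posSemidef.sqrt * exp ((t : ℂ) • H) * hA.posSemidef.sqrt) :
    O 0 = A ∧ O 1 = B ∧
    (∀ t ∈ Set.Icc (0:ℝ) 1, (O t).PosDef ∧ (O t).IsHermitian) ∧
    Differentiable ℝ O ∧
    (∀ t ∈ Set.Icc (0:ℝ) 1,
      Matrix.trace ((O t)⁻¹ * deriv O t * (O t)⁻¹ * deriv O t) =
        Matrix.trace (H * H)) := by
  set S := hA.posSemidef.sqrt
  have hS : S.IsHermitian := hA.posSemidef.isHermitian_sqrt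
  have hSu : IsUnit S := hA.isUnit_sqrt
  have hSdet : IsUnit S.det := (isUnit_iff_isUnit_det S).1 hSu
  have hexp : ∀ t : ℝ, (exp ((t : ℂ) • H)).PosDef := fun t =>
    (hH.smul (by simp [IsSelfAdjoint])).posDef_exp
  have hpos : ∀ t, (O t).PosDef := fun t => by
    simpa [hO, hS.eq] using
      (hexp t).conjTranspose_mul_mul_same (mulVec_injective_iff_isUnit.2 hSu)
  have hderiv : ∀ t : ℝ, HasDerivAt O (S * (exp ((t : ℂ) • H) * H) * S) t := fun t =>
    hO ▸ hasDerivAt_mul_exp_ofReal_smul_mul S H S t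
  refine ⟨by simp [hO, S, hA.posSemidef.sqrt_mul_self], ?_, fun t _ => ⟨hpos t, (hpos t).1⟩,
    fun t => (hderiv t).differentiableAt, fun t _ => ?_⟩
  · simp [hO, ← hHlog, Matrix.mul_assoc, mul_nonsing_inv_cancel_left _ _ hSdet,
      nonsing_inv_mul _ hSdet]
  · have hd : deriv O t = S * (exp ((t : ℂ) • H) * H) * S := (hderiv t).deriv
    rw [hd, hO]
    exact trace_inv_mul_mul_inv_mul_eq_trace_mul_self H hSu (hexp t).isUnit

/-- **Constant-speed geodesic between positive-definite matrices.**
With `H = log(A^{−1/2} B A^{−1/2})` the Hermitian logarithm, the path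
`O t = A^{1/2} exp(tH) A^{1/2}` runs from `A` to `B` through positive-definite
Hermitian matrices, is differentiable, and has constant speed
`tr(O⁻¹O'O⁻¹O') = tr(H²)` in the metric `g_O(X,Y) = tr(O⁻¹XO⁻¹Y)`. -/
theorem geodesic_path_constant_speed
    (n : ℕ) (A B : Matrix (Fin n) (Fin n) ℂ)
    (hA : A.PosDef) (hB : B.PosDef)
    (H : Matrix (Fin n) (Fin n) ℂ) (hH : H.IsHermitian)
    (hHlog : hA.posSemidef.sqrt⁻¹ * B * hA.posSemidef.sqrt⁻¹ = exp H)
    (O : ℝ → Matrix (Fin n) (Fin n) ℂ)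
    (hO : O = fun t : ℝ => hA.posSemidef.sqrt * exp ((t : ℂ) • H) * hA.posSemidef.sqrt) :
    O 0 = A ∧ O 1 = B ∧
    (∀ t ∈ Set.Icc (0:ℝ) 1, (O t).PosDef ∧ (O t).IsHermitian) ∧
    Differentiable ℝ O ∧
    (∀ t ∈ Set.Icc (0:ℝ) 1,
      Matrix.trace ((O t)⁻¹ * deriv O t * (O t)⁻¹ * deriv O t) =
        Matrix.trace (H * H)) :=
  geodesic_path_constant_speed_general n A B hA H hH hHlog O hO
end

section
/- Let φ be a positive-definite Hermitian d×d complex matrix with tr(φ) = 1, and let Π be a nonzero Hermitian projector (Π² = Π, Π ≠ 0). Let H be the Hermitian matrix with exp(H) = d·φ and set ℓ := ‖H‖_F = √(tr(H²)). Then exp(ℓ) · d · tr(Π φ) ≥ 1 (the trace is real). -/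
/-!
Diagonalize `H` with real eigenvalues `νᵢ`. Since `tr(H²) = ∑ νᵢ²`, every `|νᵢ| ≤ ℓ`, so
`dφ = exp H ≥ e^{-ℓ}·𝟙` in the Loewner order. Compressing by the projector gives
`d·tr(Πφ) ≥ e^{-ℓ}·tr Π`, and `tr Π = rank Π ≥ 1` because `Π ≠ 0`.
-/

open Matrix NormedSpace
open scoped ComplexOrder MatrixOrder

namespace Matrix

lemma trace_eq_rank_of_isIdempotentElem {n K : Type*} [Fintype n] [DecidableEq n] [Field K]
    {P : Matrix n n K} (hP : IsIdempotentElem P) : P.trace = P.rank := by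
  have hP' : IsIdempotentElem (toLin' P) := hP.map toLinAlgEquiv'
  rw [← trace_toLin'_eq, (LinearMap.IsIdempotentElem.isProj_range _ hP').trace]
  rfl

lemma rank_ne_zero_of_ne_zero {m n K : Type*} [Fintype n] [DecidableEq n] [Field K]
    {A : Matrix m n K} (hA : A ≠ 0) : A.rank ≠ 0 := by
  rw [rank, Ne, Submodule.finrank_eq_zero, LinearMap.range_eq_bot]
  exact fun h => hA (toLin'.injective (h.trans (map_zero _).symm))

variable {n 𝕜 : Type*} [Fintype n] [RCLike 𝕜]

lemma IsHermitian.trace_mul_nonneg_of_isIdempotentElem {P X : Matrix n n 𝕜}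
    (hP : P.IsHermitian) (hPP : IsIdempotentElem P) (hX : X.PosSemidef) :
    0 ≤ (P * X).trace := by
  have hconj : (P * X).trace = (Pᴴ * X * P).trace := by
    rw [hP.eq, trace_mul_cycle, hPP.eq]
  exact hconj ▸ (hX.conjTranspose_mul_mul_same P).trace_nonneg

variable [DecidableEq n]

lemma one_le_re_trace_of_isIdempotentElem {P : Matrix n n 𝕜} (hP : IsIdempotentElem P)
    (hP₀ : P ≠ 0) : 1 ≤ RCLike.re P.trace := by
  rw [trace_eq_rank_of_isIdempotentElem hP, RCLike.natCast_re, Nat.one_le_cast]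
  exact Nat.one_le_iff_ne_zero.mpr (rank_ne_zero_of_ne_zero hP₀)

lemma IsHermitian.le_re_trace_mul_of_algebraMap_le {P M : Matrix n n 𝕜} (hP : P.IsHermitian)
    (hPP : IsIdempotentElem P) (hP₀ : P ≠ 0) {r : ℝ} (hr : 0 ≤ r)
    (hM : algebraMap ℝ (Matrix n n 𝕜) r ≤ M) : r ≤ RCLike.re (P * M).trace := by
  have hgap : 0 ≤ RCLike.re (P * (M - algebraMap ℝ _ r)).trace :=
    RCLike.nonneg_iff.mp (hP.trace_mul_nonneg_of_isIdempotentElem hPP hM) |>.1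
  rw [Algebra.algebraMap_eq_smul_one, mul_sub, trace_sub, mul_smul_comm, mul_one, trace_smul,
    map_sub, RCLike.smul_re, sub_nonneg] at hgap
  calc r = r * 1 := (mul_one r).symm
    _ ≤ r * RCLike.re P.trace := by gcongr; exact one_le_re_trace_of_isIdempotentElem hPP hP₀
    _ ≤ RCLike.re (P * M).trace := hgap

lemma IsHermitian.trace_cfc {A : Matrix n n 𝕜} (hA : A.IsHermitian) (f : ℝ → ℝ) :
    (cfc f A).trace = ∑ i, (f (hA.eigenvalues i) : 𝕜) := by
  rw [hA.cfc_eq, IsHermitian.cfc, trace_map, trace_diagonal]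
  rfl

lemma IsHermitian.trace_mul_self {A : Matrix n n 𝕜} (hA : A.IsHermitian) :
    (A * A).trace = ∑ i, ((hA.eigenvalues i ^ 2 : ℝ) : 𝕜) := by
  rw [← hA.trace_cfc (· ^ 2), cfc_pow_id A 2 hA.isSelfAdjoint, sq]

lemma IsHermitian.abs_eigenvalues_le_sqrt_re_trace_mul_self {A : Matrix n n 𝕜}
    (hA : A.IsHermitian) (i : n) : |hA.eigenvalues i| ≤ √(RCLike.re (A * A).trace) := by
  rw [hA.trace_mul_self, ← RCLike.ofReal_sum, RCLike.ofReal_re]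
  exact Real.abs_le_sqrt (Finset.single_le_sum (fun j _ => sq_nonneg (hA.eigenvalues j))
    (Finset.mem_univ i))

lemma IsHermitian.algebraMap_exp_neg_sqrt_le_exp {A : Matrix n n 𝕜} (hA : A.IsHermitian) :
    algebraMap ℝ (Matrix n n 𝕜) (Real.exp (-√(RCLike.re (A * A).trace))) ≤
      NormedSpace.exp A := by
  -- `exp` only sees the topology, so any compatible normed ℝ-algebra structure will do.
  open scoped Matrix.Norms.L2Operator in
  let _ : NormedAlgebra ℝ (Matrix n n 𝕜) :=
    { norm_smul_le r B := by rw [← algebraMap_smul 𝕜 r B, norm_smul, norm_algebraMap'] }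
  rw [← CFC.real_exp_eq_normedSpace_exp hA.isSelfAdjoint]
  refine algebraMap_le_cfc _ _ _ fun x hx => ?_
  obtain ⟨i, rfl⟩ := hA.spectrum_real_eq_range_eigenvalues ▸ hx
  exact Real.exp_le_exp.mpr
    (neg_le_of_abs_le (hA.abs_eigenvalues_le_sqrt_re_trace_mul_self i))

end Matrix

theorem quantum_tradeoff_core_general
    (d : ℕ) (φ : Matrix (Fin d) (Fin d) ℂ)
    (Pr : Matrix (Fin d) (Fin d) ℂ)
    (hPrherm : Pr.IsHermitian) (hPrproj : Pr * Pr = Pr) (hPrne : Pr ≠ 0)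
    (H : Matrix (Fin d) (Fin d) ℂ) (hH : H.IsHermitian)
    (hHlog : exp H = (d : ℂ) • φ) :
    Real.exp (Real.sqrt ((Matrix.trace (H * H)).re)) * d *
      (Matrix.trace (Pr * φ)).re ≥ 1 := by
  set ℓ := Real.sqrt ((Matrix.trace (H * H)).re)
  have hlower : Real.exp (-ℓ) ≤ d * (Matrix.trace (Pr * φ)).re := by
    have h := hPrherm.le_re_trace_mul_of_algebraMap_le hPrproj hPrne (Real.exp_pos _).le
      (hHlog ▸ hH.algebraMap_exp_neg_sqrt_le_exp)
    rwa [mul_smul_comm, trace_smul, smul_eq_mul, ← RCLike.ofReal_natCast,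
      RCLike.re_ofReal_mul] at h
  calc (1 : ℝ) = Real.exp ℓ * Real.exp (-ℓ) := by
        rw [← Real.exp_add, add_neg_cancel, Real.exp_zero]
    _ ≤ Real.exp ℓ * (d * (Matrix.trace (Pr * φ)).re) := by gcongr
    _ = _ := by ring

/-- **Quantum complexity–error trade-off, core inequality.**
Let `φ` be a positive-definite density matrix (the channel output `Λ(𝟙/d)`),
`Pr ≠ 0` a Hermitian projector, and `H = log(dφ)` the Hermitian logarithm of `dφ`,
with `ℓ = ‖H‖_F = √(tr H²)`.  Then `e^ℓ · d · tr(Pr φ) ≥ 1`. -/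
theorem quantum_tradeoff_core
    (d : ℕ) (φ : Matrix (Fin d) (Fin d) ℂ)
    (hφ : φ.PosDef) (hφtr : φ.trace = 1)
    (Pr : Matrix (Fin d) (Fin d) ℂ)
    (hPrherm : Pr.IsHermitian) (hPrproj : Pr * Pr = Pr) (hPrne : Pr ≠ 0)
    (H : Matrix (Fin d) (Fin d) ℂ) (hH : H.IsHermitian)
    (hHlog : exp H = (d : ℂ) • φ) :
    Real.exp (Real.sqrt ((Matrix.trace (H * H)).re)) * d *
      (Matrix.trace (Pr * φ)).re ≥ 1 :=
  quantum_tradeoff_core_general d φ Pr hPrherm hPrproj hPrne H hH hHlog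
end

section
/- Let d ≥ 1 and let M be a positive-semidefinite Hermitian complex matrix indexed by Fin d × Fin d with tr₂(M) = 𝟙 (where tr₂(M)_{(i,j)} = Σ_k M_{(i,k),(j,k)}), and suppose φ₁ := (1/d)·tr₁(M) is positive definite (where tr₁(M)_{(i,j)} = Σ_k M_{(k,i),(k,j)}). Let t ↦ φ_t be a smooth path of positive-definite Hermitian d×d matrices with tr(φ_t) = 1 for all t ∈ [0,1], φ₀ = 𝟙/d, and φ₁ as above. Then there exists a continuous path t ↦ M_t of positive-semidefinite Hermitian matrices on Fin d × Fin d with tr₂(M_t) = 𝟙 and (1/d)·tr₁(M_t) = φ_t for all t, M₀ = Ω, and M₁ = M, where Ω is the matrix with entries Ω_{(i,i'),(j,j')} = δ_{i i'} δ_{j j'} (the Choi matrix of the identity channel, |Ω⟩⟨Ω| with |Ω⟩ = Σ_n |n⟩⊗|n⟩). -/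
open Matrix
open scoped ComplexOrder

attribute [local instance] Matrix.frobeniusNormedAddCommGroup Matrix.frobeniusNormedSpace

/-- Partial trace over the first tensor factor:
`(tr₁ M) i j = ∑ k, M (k,i) (k,j)`. -/
noncomputable def ptrace1 {d : ℕ} (M : Matrix (Fin d × Fin d) (Fin d × Fin d) ℂ) :
    Matrix (Fin d) (Fin d) ℂ :=
  fun i j => ∑ k, M (k, i) (k, j)

/-- Partial trace over the second tensor factor:
`(tr₂ M) i j = ∑ k, M (i,k) (j,k)`. -/
noncomputable def ptrace2 {d : ℕ} (M : Matrix (Fin d × Fin d) (Fin d × Fin d) ℂ) :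
    Matrix (Fin d) (Fin d) ℂ :=
  fun i j => ∑ k, M (i, k) (j, k)

/-- The Choi matrix of the identity channel, `|Ω⟩⟨Ω|` with `|Ω⟩ = ∑ n, |n⟩⊗|n⟩`:
`Ω_{(i,i'),(j,j')} = δ_{i i'} δ_{j j'}`. -/
noncomputable def choiId (d : ℕ) : Matrix (Fin d × Fin d) (Fin d × Fin d) ℂ :=
  fun p q => (if p.1 = p.2 then 1 else 0) * (if q.1 = q.2 then 1 else 0)

namespace ChoiPath

variable {d : ℕ}

/-- `𝟙 ⊗ A`. -/
noncomputable def oneKron (A : Matrix (Fin d) (Fin d) ℂ) :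
    Matrix (Fin d × Fin d) (Fin d × Fin d) ℂ :=
  fun p q => (if p.1 = q.1 then 1 else 0) * A p.2 q.2

/-- squared l2 norm of a vector -/
noncomputable def n2 (x : Fin d → ℂ) : ℝ := ∑ i, ‖x i‖ ^ 2

lemma n2_nonneg (x : Fin d → ℂ) : 0 ≤ n2 x :=
  Finset.sum_nonneg fun _ _ => sq_nonneg _

lemma dot_self (x : Fin d → ℂ) : star x ⬝ᵥ x = ((n2 x : ℝ) : ℂ) := by
  simp only [dotProduct, n2, Pi.star_apply, Complex.ofReal_sum]
  refine Finset.sum_congr rfl fun i _ => ?_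
  rw [Complex.star_def, ← Complex.normSq_eq_conj_mul_self, Complex.normSq_eq_norm_sq,
    Complex.ofReal_pow]

lemma form_add (B C : Matrix (Fin d) (Fin d) ℂ) (x : Fin d → ℂ) :
    star x ⬝ᵥ (B + C) *ᵥ x = star x ⬝ᵥ B *ᵥ x + star x ⬝ᵥ C *ᵥ x := by
  rw [add_mulVec, dotProduct_add]

lemma form_sub (B C : Matrix (Fin d) (Fin d) ℂ) (x : Fin d → ℂ) :
    star x ⬝ᵥ (B - C) *ᵥ x = star x ⬝ᵥ B *ᵥ x - star x ⬝ᵥ C *ᵥ x := by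
  rw [sub_mulVec, dotProduct_sub]

lemma form_smul (c : ℂ) (B : Matrix (Fin d) (Fin d) ℂ) (x : Fin d → ℂ) :
    star x ⬝ᵥ (c • B) *ᵥ x = c * (star x ⬝ᵥ B *ᵥ x) := by
  rw [smul_mulVec, dotProduct_smul, smul_eq_mul]

lemma form_one (x : Fin d → ℂ) : star x ⬝ᵥ (1 : Matrix (Fin d) (Fin d) ℂ) *ᵥ x = ((n2 x : ℝ) : ℂ) := by
  rw [one_mulVec, dot_self]

/-- the quadratic form of a hermitian matrix is real -/
lemma form_im (A : Matrix (Fin d) (Fin d) ℂ) (hA : A.IsHermitian) (x : Fin d → ℂ) :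
    (star x ⬝ᵥ A *ᵥ x).im = 0 := by
  have h1 : (starRingEnd ℂ) (star x ⬝ᵥ A *ᵥ x) = star x ⬝ᵥ A *ᵥ x := by
    have h0 := star_dotProduct x (A *ᵥ x)
    calc (starRingEnd ℂ) (star x ⬝ᵥ A *ᵥ x) = star (star x ⬝ᵥ A *ᵥ x) := rfl
    _ = star (A *ᵥ x) ⬝ᵥ x := by rw [h0, star_star]
    _ = (star x ᵥ* Aᴴ) ⬝ᵥ x := by rw [star_mulVec]
    _ = star x ⬝ᵥ Aᴴ *ᵥ x := by rw [dotProduct_mulVec]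
    _ = star x ⬝ᵥ A *ᵥ x := by rw [hA]
  exact Complex.conj_eq_iff_im.mp h1


/-- Cauchy–Schwarz type bound on the quadratic form by the Frobenius norm. -/
lemma form_abs_le (B : Matrix (Fin d) (Fin d) ℂ) (x : Fin d → ℂ) :
    ‖star x ⬝ᵥ B *ᵥ x‖ ≤ ‖B‖ * n2 x := by
  have h1 : ‖star x ⬝ᵥ B *ᵥ x‖
      ≤ ∑ p : Fin d × Fin d, ‖B p.1 p.2‖ * (‖x p.1‖ * ‖x p.2‖) := by
    rw [Fintype.sum_prod_type]
    calc ‖star x ⬝ᵥ B *ᵥ x‖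
        = ‖∑ i, ∑ j, star (x i) * (B i j * x j)‖ := by
          simp only [dotProduct, mulVec, Pi.star_apply, Finset.mul_sum]
      _ ≤ ∑ i, ∑ j, ‖star (x i) * (B i j * x j)‖ := by
          refine (norm_sum_le _ _).trans ?_
          exact Finset.sum_le_sum fun i _ => norm_sum_le _ _
      _ = ∑ i, ∑ j, ‖B i j‖ * (‖x i‖ * ‖x j‖) := by
          refine Finset.sum_congr rfl fun i _ => Finset.sum_congr rfl fun j _ => ?_
          rw [norm_mul, norm_mul, Complex.star_def, Complex.norm_conj]
          ring
  refine h1.trans ?_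
  set f : Fin d × Fin d → ℝ := fun p => ‖B p.1 p.2‖
  set g : Fin d × Fin d → ℝ := fun p => ‖x p.1‖ * ‖x p.2‖
  have hf : 0 ≤ ∑ p, f p ^ 2 := Finset.sum_nonneg fun _ _ => sq_nonneg _
  have hCS := Finset.sum_mul_sq_le_sq_mul_sq Finset.univ f g
  have hsum : (∑ p : Fin d × Fin d, g p ^ 2) = (n2 x) ^ 2 := by
    simp only [g, n2, mul_pow, sq]
    rw [Finset.sum_mul_sum]
    rw [Fintype.sum_prod_type]
    exact Finset.sum_congr rfl fun i _ => Finset.sum_congr rfl fun j _ => by ring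
  have hBnorm : ∑ p : Fin d × Fin d, f p ^ 2 = ‖B‖ ^ 2 := by
    rw [Matrix.frobenius_norm_def, ← Real.rpow_natCast _ 2, ← Real.rpow_mul (by positivity)]
    norm_num
    rw [Fintype.sum_prod_type]
  have hnonneg : 0 ≤ ∑ p : Fin d × Fin d, f p * g p :=
    Finset.sum_nonneg fun p _ => mul_nonneg (norm_nonneg _) (mul_nonneg (norm_nonneg _) (norm_nonneg _))
  have h2 : (∑ p : Fin d × Fin d, f p * g p) ^ 2 ≤ (‖B‖ * n2 x) ^ 2 := by
    calc (∑ p : Fin d × Fin d, f p * g p) ^ 2 ≤ (∑ p, f p ^ 2) * ∑ p, g p ^ 2 := hCS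
    _ = ‖B‖ ^ 2 * (n2 x) ^ 2 := by rw [hsum, hBnorm]
    _ = (‖B‖ * n2 x) ^ 2 := by ring
  nlinarith [h2, hnonneg, mul_nonneg (norm_nonneg B) (n2_nonneg x)]

lemma form_re_lower (B : Matrix (Fin d) (Fin d) ℂ) (x : Fin d → ℂ) :
    -(‖B‖ * n2 x) ≤ (star x ⬝ᵥ B *ᵥ x).re := by
  have h1 : |(star x ⬝ᵥ B *ᵥ x).re| ≤ ‖_‖ := Complex.abs_re_le_norm _
  have := (h1.trans (form_abs_le B x))
  linarith [neg_abs_le ((star x ⬝ᵥ B *ᵥ x).re)]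


lemma posSemidef_of_re {A : Matrix (Fin d) (Fin d) ℂ} (hA : A.IsHermitian)
    (h : ∀ x, 0 ≤ (star x ⬝ᵥ A *ᵥ x).re) : A.PosSemidef := by
  refine PosSemidef.of_dotProduct_mulVec_nonneg hA fun x => ?_
  rw [Complex.nonneg_iff]
  exact ⟨h x, (form_im A hA x).symm⟩

lemma smul_posSemidef {c : ℝ} (hc : 0 ≤ c) {B : Matrix (Fin d) (Fin d) ℂ}
    (hB : B.PosSemidef) : (((c : ℝ) : ℂ) • B).PosSemidef := by
  refine PosSemidef.of_dotProduct_mulVec_nonneg ?_ fun x => ?_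
  · rw [Matrix.IsHermitian, conjTranspose_smul, Complex.star_def, Complex.conj_ofReal, hB.1]
  · rw [form_smul]
    have h1 : (0:ℂ) ≤ ((c:ℝ):ℂ) := Complex.zero_le_real.mpr hc
    exact mul_nonneg h1 (hB.dotProduct_mulVec_nonneg x)

lemma smul_posSemidef' {c : ℝ} (hc : 0 ≤ c)
    {B : Matrix (Fin d × Fin d) (Fin d × Fin d) ℂ}
    (hB : B.PosSemidef) : (((c : ℝ) : ℂ) • B).PosSemidef := by
  refine PosSemidef.of_dotProduct_mulVec_nonneg ?_ fun x => ?_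
  · rw [Matrix.IsHermitian, conjTranspose_smul, Complex.star_def, Complex.conj_ofReal, hB.1]
  · rw [smul_mulVec, dotProduct_smul, smul_eq_mul]
    exact mul_nonneg (Complex.zero_le_real.mpr hc) (hB.dotProduct_mulVec_nonneg x)

lemma oneKron_zero : oneKron (0 : Matrix (Fin d) (Fin d) ℂ) = 0 := by
  funext p q; simp [oneKron]

lemma oneKron_isHermitian {A : Matrix (Fin d) (Fin d) ℂ} (hA : A.IsHermitian) :
    (oneKron A).IsHermitian := by
  have hA' : ∀ i j, star (A j i) = A i j := fun i j => congrFun (congrFun hA i) j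
  funext p q
  simp only [conjTranspose_apply, oneKron, ite_mul, one_mul, zero_mul,
    apply_ite (star : ℂ → ℂ), star_zero, hA' p.2 q.2]
  by_cases h : p.1 = q.1
  · simp [h]
  · simp [h, Ne.symm h]

lemma form_oneKron (A : Matrix (Fin d) (Fin d) ℂ) (x : Fin d × Fin d → ℂ) :
    star x ⬝ᵥ oneKron A *ᵥ x = ∑ i, (star (fun k => x (i, k)) ⬝ᵥ A *ᵥ (fun k => x (i, k))) := by
  simp only [dotProduct, mulVec, Pi.star_apply]
  rw [Fintype.sum_prod_type]
  refine Finset.sum_congr rfl fun i _ => Finset.sum_congr rfl fun k _ => ?_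
  congr 1
  calc (∑ q : Fin d × Fin d, oneKron A (i,k) q * x q)
      = ∑ j, ∑ l, if i = j then A k l * x (j,l) else 0 := by
        rw [Fintype.sum_prod_type]
        exact Finset.sum_congr rfl fun j _ => Finset.sum_congr rfl fun l _ => by
          simp [oneKron, ite_mul]
    _ = ∑ l, ∑ j, if i = j then A k l * x (j,l) else 0 := Finset.sum_comm
    _ = ∑ l, A k l * x (i,l) := by simp

lemma oneKron_posSemidef {A : Matrix (Fin d) (Fin d) ℂ} (hA : A.PosSemidef) :
    (oneKron A).PosSemidef := by
  refine PosSemidef.of_dotProduct_mulVec_nonneg (oneKron_isHermitian hA.1) fun x => ?_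
  rw [form_oneKron]
  exact Finset.sum_nonneg fun i _ => hA.dotProduct_mulVec_nonneg _


lemma choiId_posSemidef : (choiId d).PosSemidef := by
  refine PosSemidef.of_dotProduct_mulVec_nonneg ?_ ?_
  · funext p q
    simp only [conjTranspose_apply, choiId, apply_ite (star : ℂ → ℂ), star_zero, star_one,
      star_mul']
    ring
  · intro x
    set s : ℂ := ∑ q : Fin d × Fin d, (if q.1 = q.2 then 1 else 0) * x q with hs
    have key : star x ⬝ᵥ choiId d *ᵥ x = star s * s := by
      have hstar : star s = ∑ p : Fin d × Fin d, (if p.1 = p.2 then 1 else 0) * star (x p) := by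
        rw [hs, star_sum]
        refine Finset.sum_congr rfl fun p _ => ?_
        simp [apply_ite (star : ℂ → ℂ), star_mul']
      rw [hstar, Finset.sum_mul_sum]
      simp only [dotProduct, mulVec, Pi.star_apply, choiId]
      refine Finset.sum_congr rfl fun p _ => ?_
      rw [Finset.mul_sum]
      refine Finset.sum_congr rfl fun q _ => by ring
    rw [key]
    exact star_mul_self_nonneg s

lemma ptrace1_add (M N : Matrix (Fin d × Fin d) (Fin d × Fin d) ℂ) :
    ptrace1 (M + N) = ptrace1 M + ptrace1 N := by
  funext i j; simp [ptrace1, Finset.sum_add_distrib]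

lemma ptrace2_add (M N : Matrix (Fin d × Fin d) (Fin d × Fin d) ℂ) :
    ptrace2 (M + N) = ptrace2 M + ptrace2 N := by
  funext i j; simp [ptrace2, Finset.sum_add_distrib]

lemma ptrace1_smul (c : ℂ) (M : Matrix (Fin d × Fin d) (Fin d × Fin d) ℂ) :
    ptrace1 (c • M) = c • ptrace1 M := by
  funext i j; simp [ptrace1, Finset.mul_sum]

lemma ptrace2_smul (c : ℂ) (M : Matrix (Fin d × Fin d) (Fin d × Fin d) ℂ) :
    ptrace2 (c • M) = c • ptrace2 M := by
  funext i j; simp [ptrace2, Finset.mul_sum]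

lemma ptrace1_choiId : ptrace1 (choiId d) = 1 := by
  funext i j
  simp only [ptrace1, choiId]
  by_cases h : i = j
  · subst h
    simp [Matrix.one_apply]
  · rw [Matrix.one_apply_ne h]
    refine Finset.sum_eq_zero fun k _ => ?_
    by_cases hk : k = i
    · subst hk; simp [h]
    · simp [hk]

lemma ptrace2_choiId : ptrace2 (choiId d) = 1 := by
  funext i j
  simp only [ptrace2, choiId]
  by_cases h : i = j
  · subst h
    simp [Matrix.one_apply]
  · rw [Matrix.one_apply_ne h]
    refine Finset.sum_eq_zero fun k _ => ?_
    by_cases hk : i = k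
    · subst hk; simp [Ne.symm h]
    · simp [hk]

lemma ptrace1_oneKron (A : Matrix (Fin d) (Fin d) ℂ) :
    ptrace1 (oneKron A) = ((d : ℕ) : ℂ) • A := by
  funext i j
  simp [ptrace1, oneKron, Finset.sum_const, mul_comm]

lemma ptrace2_oneKron (A : Matrix (Fin d) (Fin d) ℂ) :
    ptrace2 (oneKron A) = A.trace • 1 := by
  funext i j
  simp only [ptrace2, oneKron, Matrix.smul_apply, Matrix.one_apply, Matrix.trace,
    Matrix.diag, smul_eq_mul]
  by_cases h : i = j
  · simp [h, Finset.mul_sum]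
  · simp [h]

lemma trace_ptrace1 (M : Matrix (Fin d × Fin d) (Fin d × Fin d) ℂ) :
    (ptrace1 M).trace = M.trace := by
  simp only [Matrix.trace, Matrix.diag, ptrace1]
  rw [Fintype.sum_prod_type, Finset.sum_comm]

lemma trace_ptrace2 (M : Matrix (Fin d × Fin d) (Fin d × Fin d) ℂ) :
    (ptrace2 M).trace = M.trace := by
  simp only [Matrix.trace, Matrix.diag, ptrace2]
  rw [Fintype.sum_prod_type]


lemma n2_continuous : Continuous (n2 (d := d)) := by
  refine continuous_finset_sum _ fun i _ => ?_
  exact ((continuous_apply i).norm).pow 2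

lemma form_continuous (P : Matrix (Fin d) (Fin d) ℂ) :
    Continuous (fun x : Fin d → ℂ => (star x ⬝ᵥ P *ᵥ x).re) := by
  refine Complex.continuous_re.comp ?_
  simp only [dotProduct, mulVec, Pi.star_apply]
  refine continuous_finset_sum _ fun i _ => ?_
  refine Continuous.mul (Complex.continuous_conj.comp (continuous_apply i)) ?_
  exact continuous_finset_sum _ fun j _ => continuous_const.mul (continuous_apply j)

lemma n2_eq_zero_iff {x : Fin d → ℂ} : n2 x = 0 ↔ x = 0 := by
  constructor
  · intro h
    funext i
    have h1 : ∀ i ∈ Finset.univ, (0:ℝ) ≤ ‖x i‖ ^ 2 := fun _ _ => sq_nonneg _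
    have := (Finset.sum_eq_zero_iff_of_nonneg h1).mp h i (Finset.mem_univ i)
    exact norm_eq_zero.mp (pow_eq_zero_iff two_ne_zero |>.mp this)
  · intro h; subst h; simp [n2]

lemma exists_posdef_lower (hd : 1 ≤ d) {P : Matrix (Fin d) (Fin d) ℂ} (hP : P.PosDef) :
    ∃ ε : ℝ, 0 < ε ∧ ∀ x, ε * n2 x ≤ (star x ⬝ᵥ P *ᵥ x).re := by
  classical
  set g : (Fin d → ℂ) → ℝ := fun x => (star x ⬝ᵥ P *ᵥ x).re with hg
  set S : Set (Fin d → ℂ) := {x | n2 x = 1} with hS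
  have hclosed : IsClosed S := isClosed_eq n2_continuous continuous_const
  have hsub : S ⊆ Metric.closedBall 0 1 := by
    intro x hx
    rw [Metric.mem_closedBall, dist_zero_right]
    refine (pi_norm_le_iff_of_nonneg (by norm_num)).mpr fun i => ?_
    have h1 : ‖x i‖ ^ 2 ≤ n2 x :=
      Finset.single_le_sum (f := fun i => ‖x i‖ ^ 2) (fun _ _ => sq_nonneg _) (Finset.mem_univ i)
    rw [hx] at h1
    exact (pow_le_one_iff_of_nonneg (norm_nonneg _) two_ne_zero).mp h1
  have hcompact : IsCompact S :=
    (isCompact_closedBall (0 : Fin d → ℂ) 1).of_isClosed_subset hclosed hsub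
  have hne : S.Nonempty := by
    refine ⟨Pi.single (⟨0, hd⟩ : Fin d) 1, ?_⟩
    show n2 _ = 1
    simp only [n2, Pi.single_apply]
    rw [Finset.sum_congr rfl (fun i _ => by
      rw [apply_ite (fun z : ℂ => ‖z‖ ^ 2)] : ∀ i ∈ Finset.univ, _ = _)]
    simp
  obtain ⟨y, hyS, hymin⟩ := hcompact.exists_isMinOn hne (form_continuous P).continuousOn
  have hy0 : y ≠ 0 := by
    intro h
    rw [h] at hyS
    simp only [hS, Set.mem_setOf_eq, n2] at hyS
    simp at hyS
  have hεpos : 0 < g y := by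
    have := hP.re_dotProduct_pos hy0
    simpa using this
  refine ⟨g y, hεpos, fun x => ?_⟩
  by_cases hx : x = 0
  · subst hx
    simp [g, n2]
  · have hn2pos : 0 < n2 x := by
      rcases lt_or_eq_of_le (n2_nonneg x) with h | h
      · exact h
      · exact absurd (n2_eq_zero_iff.mp h.symm) hx
    set r : ℝ := Real.sqrt (n2 x) with hr
    have hrpos : 0 < r := Real.sqrt_pos.mpr hn2pos
    have hr2 : r ^ 2 = n2 x := Real.sq_sqrt (n2_nonneg x)
    set c : ℂ := ((r⁻¹ : ℝ) : ℂ) with hc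
    have hyS' : (c • x) ∈ S := by
      show n2 (c • x) = 1
      simp only [n2, Pi.smul_apply, smul_eq_mul, norm_mul, mul_pow, hc,
        Complex.norm_real, Real.norm_eq_abs, abs_of_pos (inv_pos.mpr hrpos)]
      rw [← Finset.mul_sum]
      show (r⁻¹) ^ 2 * n2 x = 1
      rw [← hr2]
      field_simp
    have hform : g (c • x) = (r⁻¹) ^ 2 * g x := by
      simp only [g]
      rw [star_smul, smul_dotProduct, mulVec_smul, dotProduct_smul]
      simp only [smul_eq_mul, hc, Complex.star_def, Complex.conj_ofReal]
      rw [← mul_assoc, ← Complex.ofReal_mul, Complex.re_ofReal_mul]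
      ring
    have h1 : g y ≤ g (c • x) := hymin hyS'
    rw [hform] at h1
    have h2 : g y * n2 x ≤ g x := by
      rw [← hr2]
      have h3 : g y * r ^ 2 ≤ (r⁻¹)^2 * g x * r ^ 2 :=
        mul_le_mul_of_nonneg_right h1 (sq_nonneg r)
      calc g y * r ^ 2 ≤ (r⁻¹)^2 * g x * r ^ 2 := h3
        _ = g x := by field_simp
    linarith

end ChoiPath

open Matrix ChoiPath

/-- `𝟙 ⊗ ·` as a linear map, for continuity purposes. -/
noncomputable def oneKronL (d : ℕ) :
    Matrix (Fin d) (Fin d) ℂ →ₗ[ℂ] Matrix (Fin d × Fin d) (Fin d × Fin d) ℂ where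
  toFun := oneKron
  map_add' A B := by funext p q; simp [oneKron, mul_add]
  map_smul' c A := by funext p q; simp [oneKron, Matrix.smul_apply, mul_smul_comm]

set_option maxHeartbeats 1000000 in
/-- **Existence of a path of quantum channels realizing a prescribed output path.**
Let `M` be a Choi matrix (positive semidefinite with `tr₂ M = 𝟙`) whose normalized
first partial trace `φ₁ = (1/d)·tr₁ M` is positive definite, and let `t ↦ φ t` be a
smooth path of positive-definite density matrices with `φ 0 = 𝟙/d` and `φ 1 = φ₁`.
Then there is a continuous path of Choi matrices `t ↦ M t` from the Choi matrix of
the identity channel to `M` with `(1/d)·tr₁ (M t) = φ t` for all `t ∈ [0,1]`. -/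
theorem exists_path_of_quantum_channels
    (d : ℕ) (hd : 1 ≤ d)
    (M : Matrix (Fin d × Fin d) (Fin d × Fin d) ℂ)
    (hM : M.PosSemidef) (hMtr2 : ptrace2 M = 1)
    (hφ₁ : (((d : ℂ)⁻¹) • ptrace1 M).PosDef)
    (φ : ℝ → Matrix (Fin d) (Fin d) ℂ)
    (hφsmooth : ContDiff ℝ (⊤ : ℕ∞) φ)
    (hφpos : ∀ t ∈ Set.Icc (0:ℝ) 1, (φ t).PosDef)
    (hφtr : ∀ t ∈ Set.Icc (0:ℝ) 1, (φ t).trace = 1)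
    (hφ0 : φ 0 = ((d : ℂ)⁻¹) • (1 : Matrix (Fin d) (Fin d) ℂ))
    (hφ1 : φ 1 = ((d : ℂ)⁻¹) • ptrace1 M) :
    ∃ Mt : ℝ → Matrix (Fin d × Fin d) (Fin d × Fin d) ℂ,
      ContinuousOn Mt (Set.Icc (0:ℝ) 1) ∧
      Mt 0 = choiId d ∧ Mt 1 = M ∧
      ∀ t ∈ Set.Icc (0:ℝ) 1,
        (Mt t).PosSemidef ∧ ptrace2 (Mt t) = 1 ∧
        ((d : ℂ)⁻¹) • ptrace1 (Mt t) = φ t := by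
  classical
  have hdR : (0:ℝ) < d := by exact_mod_cast Nat.lt_of_lt_of_le Nat.zero_lt_one hd
  have hdC : ((d:ℕ):ℂ) ≠ 0 := Nat.cast_ne_zero.mpr (by omega)
  set φ₁c : Matrix (Fin d) (Fin d) ℂ := ((d : ℂ)⁻¹) • ptrace1 M with hφ₁c
  -- uniform lower bound for the quadratic form of φ₁c
  obtain ⟨ε, hεpos, hεlow⟩ := exists_posdef_lower hd hφ₁
  -- Lipschitz bound for φ on [0,1]
  obtain ⟨L₀, hL₀⟩ := (isCompact_Icc (a := (0:ℝ)) (b := 1)).exists_bound_of_continuousOn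
      ((hφsmooth.continuous_deriv (by simp)).continuousOn)
  set L : ℝ := max L₀ 0 with hL
  have hLnn : 0 ≤ L := le_max_right _ _
  have hDL : ∀ x ∈ Set.Icc (0:ℝ) 1, ‖deriv φ x‖ ≤ L :=
    fun x hx => (hL₀ x hx).trans (le_max_left _ _)
  have hHD : ∀ s : Set ℝ, ∀ x ∈ s, HasDerivWithinAt φ (deriv φ x) s x :=
    fun s x _ => ((hφsmooth.differentiable (by simp)).differentiableAt.hasDerivAt).hasDerivWithinAt
  have lip0 : ∀ t ∈ Set.Icc (0:ℝ) 1, ‖φ t - φ 0‖ ≤ L * t := by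
    intro t ht
    have := norm_image_sub_le_of_norm_deriv_le_segment' (f := φ) (f' := deriv φ)
      (a := 0) (b := 1) (fun x hx => hHD _ x hx)
      (fun x hx => hDL x ⟨hx.1, hx.2.le⟩) t ht
    simpa using this
  have lip1 : ∀ t ∈ Set.Icc (0:ℝ) 1, ‖φ t - φ 1‖ ≤ L * (1 - t) := by
    intro t ht
    have h2 := norm_image_sub_le_of_norm_deriv_le_segment' (f := φ) (f' := deriv φ)
      (a := t) (b := 1) (fun x hx => hHD _ x hx)
      (fun x hx => hDL x ⟨ht.1.trans hx.1, hx.2.le⟩) 1 (Set.right_mem_Icc.mpr ht.2)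
    rw [norm_sub_rev]
    exact h2
  -- speed constant
  set K : ℝ := 2 + (d : ℝ) * L + L / ε with hK
  have hLε : 0 ≤ L / ε := div_nonneg hLnn hεpos.le
  have hK2 : 2 ≤ K := by rw [hK]; nlinarith [mul_nonneg hdR.le hLnn]
  have hKdL : (d : ℝ) * L ≤ K := by rw [hK]; nlinarith
  have hKε : L ≤ K * ε := by
    have h1 : L / ε * ε = L := div_mul_cancel₀ L hεpos.ne'
    rw [hK]
    nlinarith [mul_nonneg (mul_nonneg hdR.le hLnn) hεpos.le, hεpos]
  -- interpolation coefficients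
  set a : ℝ → ℝ := fun t => max 0 (1 - K * t) with ha
  set b : ℝ → ℝ := fun t => max 0 (1 - K * (1 - t)) with hb
  have hann : ∀ t, 0 ≤ a t := fun t => le_max_left _ _
  have hbnn : ∀ t, 0 ≤ b t := fun t => le_max_left _ _
  have ha0 : a 0 = 1 := by simp [ha]
  have hb0 : b 0 = 0 := by
    simp only [hb]
    rw [max_eq_left]
    nlinarith
  have ha1 : a 1 = 0 := by
    simp only [ha]
    rw [max_eq_left]
    nlinarith
  have hb1 : b 1 = 1 := by simp [hb]
  -- the path
  set A : ℝ → Matrix (Fin d) (Fin d) ℂ :=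
    fun t => φ t - ((↑(a t) : ℂ) * ((d:ℕ):ℂ)⁻¹) • 1 - (↑(b t) : ℂ) • φ₁c with hA
  set Mt : ℝ → Matrix (Fin d × Fin d) (Fin d × Fin d) ℂ :=
    fun t => (↑(a t) : ℂ) • choiId d + oneKron (A t) + (↑(b t) : ℂ) • M with hMt
  -- traces
  have htrM : M.trace = ((d:ℕ):ℂ) := by
    have h1 := trace_ptrace2 M
    rw [hMtr2] at h1
    simp only [Matrix.trace_one] at h1
    rw [← h1]
    simp
  have htrφ₁c : φ₁c.trace = 1 := by
    rw [hφ₁c, Matrix.trace_smul, trace_ptrace1, htrM, smul_eq_mul, inv_mul_cancel₀ hdC]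
  have htrA : ∀ t ∈ Set.Icc (0:ℝ) 1, (A t).trace = 1 - (↑(a t) : ℂ) - (↑(b t) : ℂ) := by
    intro t ht
    rw [hA]
    simp only [Matrix.trace_sub, Matrix.trace_smul, Matrix.trace_one, hφtr t ht, htrφ₁c,
      smul_eq_mul, mul_one]
    field_simp
    simp only [Fintype.card_fin]; ring
  -- Hermitian of A t
  have hermA : ∀ t ∈ Set.Icc (0:ℝ) 1, (A t).IsHermitian := by
    intro t ht
    have h1 : ((((a t) : ℂ) * ((d:ℕ):ℂ)⁻¹) • (1 : Matrix (Fin d) (Fin d) ℂ)).IsHermitian := by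
      rw [Matrix.IsHermitian, Matrix.conjTranspose_smul, Matrix.conjTranspose_one]
      congr 1
      simp [Complex.star_def, _root_.map_mul, Complex.conj_ofReal]
    have h2 : ((↑(b t) : ℂ) • φ₁c).IsHermitian := by
      rw [Matrix.IsHermitian, Matrix.conjTranspose_smul, hφ₁.1]
      congr 1
      simp [Complex.star_def, Complex.conj_ofReal]
    exact ((hφpos t ht).1.sub h1).sub h2
  -- positive semidefiniteness of A t
  have hApsd : ∀ t ∈ Set.Icc (0:ℝ) 1, (A t).PosSemidef := by
    intro t ht
    by_cases hA1 : 0 < 1 - K * t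
    · -- beginning: b t = 0
      have hbt : b t = 0 := by
        have ht2 : t ≤ 1 := ht.2
        show (0:ℝ) ⊔ (1 - K * (1 - t)) = 0
        apply max_eq_left
        nlinarith
      have hat : a t = 1 - K * t := by
        show (0:ℝ) ⊔ (1 - K * t) = 1 - K * t
        exact max_eq_right hA1.le
      have hAeq : A t = (φ t - φ 0) + ((K * t / d : ℝ) : ℂ) • 1 := by
        rw [hA, hφ0]
        funext i j
        simp only [Matrix.sub_apply, Matrix.add_apply, Matrix.smul_apply, smul_eq_mul, hat, hbt]
        push_cast
        field_simp
        ring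
      refine posSemidef_of_re (hermA t ht) fun x => ?_
      rw [hAeq, form_add, form_smul, form_one, ← Complex.ofReal_mul, Complex.add_re,
        Complex.ofReal_re]
      have h1 := form_re_lower (φ t - φ 0) x
      have h2 := lip0 t ht
      have h3 : ‖φ t - φ 0‖ * n2 x ≤ L * t * n2 x :=
        mul_le_mul_of_nonneg_right h2 (n2_nonneg x)
      have h4 : L * t * n2 x ≤ K * t / d * n2 x := by
        have : L * t ≤ K * t / d := by
          rw [le_div_iff₀ hdR]
          nlinarith [mul_nonneg ht.1 (sub_nonneg.mpr hKdL)]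
        exact mul_le_mul_of_nonneg_right this (n2_nonneg x)
      linarith
    · have hat : a t = 0 := by
        show (0:ℝ) ⊔ (1 - K * t) = 0
        exact max_eq_left (not_lt.mp hA1)
      by_cases hB1 : 0 < 1 - K * (1 - t)
      · -- end: a t = 0, b t = 1 - K (1 - t)
        have hbt : b t = 1 - K * (1 - t) := by
          show (0:ℝ) ⊔ (1 - K * (1 - t)) = 1 - K * (1 - t)
          exact max_eq_right hB1.le
        have hAeq : A t = (φ t - φ 1) + ((K * (1 - t) : ℝ) : ℂ) • φ₁c := by
          rw [hA, hφ1]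
          funext i j
          simp only [Matrix.sub_apply, Matrix.add_apply, Matrix.smul_apply, smul_eq_mul,
            hat, hbt]
          push_cast
          ring
        refine posSemidef_of_re (hermA t ht) fun x => ?_
        rw [hAeq, form_add, form_smul, Complex.add_re, Complex.re_ofReal_mul]
        have h1 := form_re_lower (φ t - φ 1) x
        have h2 := lip1 t ht
        have h3 : ‖φ t - φ 1‖ * n2 x ≤ L * (1 - t) * n2 x :=
          mul_le_mul_of_nonneg_right h2 (n2_nonneg x)
        have h5 := hεlow x
        have h6 : K * (1 - t) * (ε * n2 x) ≤ K * (1 - t) * (star x ⬝ᵥ φ₁c *ᵥ x).re := by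
          exact mul_le_mul_of_nonneg_left h5
            (mul_nonneg (by linarith) (by linarith [ht.2]))
        have h7 : L * (1 - t) * n2 x ≤ K * (1 - t) * (ε * n2 x) := by
          nlinarith [n2_nonneg x, ht.2, mul_nonneg (sub_nonneg.mpr hKε) (sub_nonneg.mpr ht.2),
            mul_nonneg (mul_nonneg (sub_nonneg.mpr hKε) (sub_nonneg.mpr ht.2)) (n2_nonneg x)]
        linarith
      · -- middle: A t = φ t
        have hbt : b t = 0 := by
          show (0:ℝ) ⊔ (1 - K * (1 - t)) = 0
          exact max_eq_left (not_lt.mp hB1)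
        have hAeq : A t = φ t := by
          rw [hA]
          simp [hat, hbt]
        rw [hAeq]
        exact (hφpos t ht).posSemidef
  -- endpoints
  have hMt0 : Mt 0 = choiId d := by
    have hA0 : A 0 = 0 := by
      show φ 0 - ((↑(a 0) : ℂ) * ((d:ℕ):ℂ)⁻¹) • 1 - (↑(b 0) : ℂ) • φ₁c = 0
      rw [hφ0, ha0, hb0]
      push_cast
      simp
    rw [hMt]
    simp [hA0, oneKron_zero, ha0, hb0]
  have hMt1 : Mt 1 = M := by
    have hA1 : A 1 = 0 := by
      show φ 1 - ((↑(a 1) : ℂ) * ((d:ℕ):ℂ)⁻¹) • 1 - (↑(b 1) : ℂ) • φ₁c = 0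
      rw [hφ1, ha1, hb1]
      push_cast
      simp
    rw [hMt]
    simp [hA1, oneKron_zero, ha1, hb1]
  -- continuity
  have hacont : Continuous a := continuous_const.max (continuous_const.sub
    (continuous_const.mul continuous_id))
  have hbcont : Continuous b := continuous_const.max (continuous_const.sub
    (continuous_const.mul (continuous_const.sub continuous_id)))
  have hAcont : Continuous A := by
    refine Continuous.sub (Continuous.sub hφsmooth.continuous ?_) ?_
    · exact ((Complex.continuous_ofReal.comp hacont).mul continuous_const).smul continuous_const
    · exact (Complex.continuous_ofReal.comp hbcont).smul continuous_const
  have hMtcont : Continuous Mt := by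
    have h1 : Continuous (fun t => oneKron (A t)) := by
      have := (oneKronL d).continuous_of_finiteDimensional.comp hAcont
      exact this
    exact (((Complex.continuous_ofReal.comp hacont).smul continuous_const).add h1).add
      ((Complex.continuous_ofReal.comp hbcont).smul continuous_const)
  refine ⟨Mt, hMtcont.continuousOn, hMt0, hMt1, fun t ht => ⟨?_, ?_, ?_⟩⟩
  · -- PosSemidef
    rw [hMt]
    exact ((smul_posSemidef' (hann t) choiId_posSemidef).add
      (oneKron_posSemidef (hApsd t ht))).add (smul_posSemidef' (hbnn t) hM)
  · -- ptrace2
    rw [hMt]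
    simp only [ptrace2_add, ptrace2_smul, ptrace2_choiId, ptrace2_oneKron, hMtr2,
      htrA t ht]
    rw [← add_smul, ← add_smul]
    have hcoef : ((↑(a t) : ℂ) + (1 - ↑(a t) - ↑(b t)) + ↑(b t)) = 1 := by ring
    rw [hcoef, one_smul]
  · -- ptrace1
    rw [hMt]
    simp only [ptrace1_add, ptrace1_smul, ptrace1_choiId, ptrace1_oneKron]
    funext i j
    simp only [Matrix.smul_apply, Matrix.add_apply, hA, Matrix.sub_apply, Matrix.one_apply,
      hφ₁c, smul_eq_mul]
    field_simp
    ring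
end

section
/- Let d ≥ 2 and let p : [0,1] → ℝ^d be a continuously differentiable path with 0 < p_n(t) < 1 and Σ_n p_n(t) = 1 for all t and n. Let S(p) := −Σ_{n=1}^d p_n ln p_n denote the Shannon entropy. Then ∫₀¹ √(Σ_{n=1}^d (p_n'(t)/p_n(t))²) dt ≥ |ln S(p(0)) − ln S(p(1))|. -/
open Real

/-- The Shannon entropy `S(p) = −∑ n, p n * log (p n)`. -/
noncomputable def shannonEntropy {d : ℕ} (p : Fin d → ℝ) : ℝ :=
  -∑ n, p n * Real.log (p n)

/-!
Along the path, `d/dt ln S(p) = −∑ₙ ṗₙ ln pₙ / S(p)`, because `∑ₙ ṗₙ = 0` kills the `−∑ₙ ṗₙ`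
term of `d/dt S(p)`. Writing `ṗₙ ln pₙ = −(ṗₙ / pₙ) · (−pₙ ln pₙ)` with weights `−pₙ ln pₙ ≥ 0`
summing to `S(p)`, Cauchy–Schwarz bounds this derivative by the speed `√(∑ₙ (ṗₙ / pₙ)²)`.
Integrating over `[0, 1]` bounds `|ln S(p 0) − ln S(p 1)|` by the length of the path.
-/

open Set MeasureTheory Filter Topology

theorem abs_sum_mul_le_sqrt_sum_sq_mul_sum {ι : Type*} (s : Finset ι)
    (a b : ι → ℝ) (hb : ∀ i ∈ s, 0 ≤ b i) :
    |∑ i ∈ s, a i * b i| ≤ √(∑ i ∈ s, a i ^ 2) * ∑ i ∈ s, b i := by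
  calc |∑ i ∈ s, a i * b i|
      ≤ ∑ i ∈ s, |a i| * b i := by
        refine (Finset.abs_sum_le_sum_abs _ _).trans_eq (Finset.sum_congr rfl fun i hi => ?_)
        rw [abs_mul, abs_of_nonneg (hb i hi)]
    _ ≤ ∑ i ∈ s, √(∑ j ∈ s, a j ^ 2) * b i := by
        refine Finset.sum_le_sum fun i hi => mul_le_mul_of_nonneg_right ?_ (hb i hi)
        exact abs_le_sqrt (Finset.single_le_sum (fun j _ => sq_nonneg (a j)) hi)
    _ = √(∑ i ∈ s, a i ^ 2) * ∑ i ∈ s, b i := (Finset.mul_sum _ _ _).symm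

theorem abs_sub_le_integral_of_hasDerivAt_of_abs_le {f f' g : ℝ → ℝ} {a b : ℝ}
    (hab : a ≤ b) (hf : ContinuousOn f (Icc a b)) (hderiv : ∀ t ∈ Ioo a b, HasDerivAt f (f' t) t)
    (hg : IntegrableOn g (Icc a b)) (hbound : ∀ t ∈ Ioo a b, |f' t| ≤ g t) :
    |f b - f a| ≤ ∫ t in a..b, g t := by
  refine abs_sub_le_iff.2 ⟨?_, ?_⟩
  · exact intervalIntegral.sub_le_integral_of_hasDeriv_right_of_le hab hf
      (fun t ht => (hderiv t ht).hasDerivWithinAt) hg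
      fun t ht => (le_abs_self _).trans (hbound t ht)
  · have := intervalIntegral.sub_le_integral_of_hasDeriv_right_of_le hab hf.neg
      (fun t ht => (hderiv t ht).neg.hasDerivWithinAt) hg
      fun t ht => (neg_le_abs _).trans (hbound t ht)
    simp only [Pi.neg_apply] at this
    linarith

theorem sum_eq_zero_of_hasDerivAt_of_sum_eventuallyEq {ι : Type*} (s : Finset ι)
    {f : ι → ℝ → ℝ} {f' : ι → ℝ} {t c : ℝ} (hf : ∀ i ∈ s, HasDerivAt (f i) (f' i) t)
    (hc : ∀ᶠ x in 𝓝 t, ∑ i ∈ s, f i x = c) : ∑ i ∈ s, f' i = 0 :=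
  (HasDerivAt.fun_sum hf).unique ((hasDerivAt_const t c).congr_of_eventuallyEq hc)

section Entropy

variable {d : ℕ}

theorem shannonEntropy_eq_sum_negMulLog (q : Fin d → ℝ) :
    shannonEntropy q = ∑ n, negMulLog (q n) := by
  simp [shannonEntropy, negMulLog, Finset.sum_neg_distrib]

theorem continuous_shannonEntropy : Continuous (shannonEntropy : (Fin d → ℝ) → ℝ) := by
  simp_rw [funext shannonEntropy_eq_sum_negMulLog]
  fun_prop

theorem shannonEntropy_pos [Nonempty (Fin d)] {q : Fin d → ℝ}
    (hq : ∀ n, 0 < q n ∧ q n < 1) : 0 < shannonEntropy q := by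
  rw [shannonEntropy_eq_sum_negMulLog]
  exact Finset.sum_pos (fun n _ => mul_pos_of_neg_of_neg (neg_neg_of_pos (hq n).1)
    (log_neg (hq n).1 (hq n).2)) Finset.univ_nonempty

theorem hasDerivAt_shannonEntropy {p : ℝ → Fin d → ℝ} {v : Fin d → ℝ} {t : ℝ}
    (hp : ∀ n, HasDerivAt (fun s => p s n) (v n) t) (hpt : ∀ n, p t n ≠ 0) :
    HasDerivAt (fun s => shannonEntropy (p s)) (∑ n, (-log (p t n) - 1) * v n) t := by
  simp_rw [shannonEntropy_eq_sum_negMulLog]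
  exact HasDerivAt.fun_sum fun n _ =>
    (hasDerivAt_negMulLog (hpt n)).comp (h₂ := negMulLog) (h := fun s => p s n) t (hp n)

theorem hasDerivAt_log_shannonEntropy {p : ℝ → Fin d → ℝ} {v : Fin d → ℝ} {t : ℝ}
    (hp : ∀ n, HasDerivAt (fun s => p s n) (v n) t) (hv : ∑ n, v n = 0)
    (hpt : ∀ n, p t n ≠ 0) (hS : shannonEntropy (p t) ≠ 0) :
    HasDerivAt (fun s => log (shannonEntropy (p s)))
      (-(∑ n, log (p t n) * v n) / shannonEntropy (p t)) t := by
  have hderiv : ∑ n, (-log (p t n) - 1) * v n = -∑ n, log (p t n) * v n := by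
    simp only [sub_mul, neg_mul, one_mul, Finset.sum_sub_distrib, Finset.sum_neg_distrib, hv,
      sub_zero]
  simpa only [hderiv] using (hasDerivAt_shannonEntropy hp hpt).log hS

theorem abs_neg_sum_log_mul_div_shannonEntropy_le {q : Fin d → ℝ} (v : Fin d → ℝ)
    (hq0 : ∀ n, 0 < q n) (hq1 : ∀ n, q n ≤ 1) (hS : 0 < shannonEntropy q) :
    |-(∑ n, log (q n) * v n) / shannonEntropy q| ≤ √(∑ n, (v n / q n) ^ 2) := by
  rw [abs_div, abs_neg, abs_of_pos hS, div_le_iff₀ hS, shannonEntropy_eq_sum_negMulLog]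
  have hweights : ∀ n, log (q n) * v n = -(v n / q n * negMulLog (q n)) := fun n => by
    rw [negMulLog]
    field_simp [(hq0 n).ne']
  simp only [hweights, Finset.sum_neg_distrib, abs_neg]
  exact abs_sum_mul_le_sqrt_sum_sq_mul_sum _ _ _
    fun n _ => negMulLog_nonneg (hq0 n).le (hq1 n)

end Entropy

theorem entropic_path_length_lower_bound_general
    (d : ℕ) (p : ℝ → Fin d → ℝ)
    (hC1 : ∀ n, ContDiff ℝ 1 (fun t => p t n))
    (hpos : ∀ t ∈ Set.Icc (0:ℝ) 1, ∀ n, 0 < p t n ∧ p t n < 1)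
    (hsum : ∀ t ∈ Set.Icc (0:ℝ) 1, ∑ n, p t n = 1) :
    ∫ t in (0:ℝ)..1,
        Real.sqrt (∑ n, (deriv (fun s => p s n) t / p t n) ^ 2) ≥
      |Real.log (shannonEntropy (p 0)) - Real.log (shannonEntropy (p 1))| := by
  have : Nonempty (Fin d) := by
    by_contra h
    simpa [not_nonempty_iff.1 h] using hsum 0 (left_mem_Icc.2 zero_le_one)
  have hp : ∀ n t, HasDerivAt (fun s => p s n) (deriv (fun s => p s n) t) t := fun n t =>
    ((hC1 n).differentiable one_ne_zero t).hasDerivAt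
  have hS : ∀ t ∈ Icc (0:ℝ) 1, 0 < shannonEntropy (p t) := fun t ht =>
    shannonEntropy_pos (hpos t ht)
  rw [ge_iff_le, abs_sub_comm]
  refine abs_sub_le_integral_of_hasDerivAt_of_abs_le (f := fun t => log (shannonEntropy (p t)))
    (f' := fun t => -(∑ n, log (p t n) * deriv (fun s => p s n) t) / shannonEntropy (p t))
    zero_le_one ?_ (fun t ht => ?_) ?_ fun t ht => ?_
  · exact (continuous_shannonEntropy.comp (continuous_pi fun n => (hC1 n).continuous))
      |>.continuousOn.log fun t ht => (hS t ht).ne'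
  · have hsum' : ∀ᶠ s in 𝓝 t, ∑ n, p s n = 1 :=
      eventually_of_mem (Ioo_mem_nhds ht.1 ht.2) fun s hs => hsum s (Ioo_subset_Icc_self hs)
    have ht' := Ioo_subset_Icc_self ht
    exact hasDerivAt_log_shannonEntropy (hp · t)
      (sum_eq_zero_of_hasDerivAt_of_sum_eventuallyEq _ (fun n _ => hp n t) hsum')
      (fun n => (hpos t ht' n).1.ne') (hS t ht').ne'
  · refine ContinuousOn.integrableOn_Icc (continuous_sqrt.comp_continuousOn ?_)
    refine continuousOn_finsetSum _ fun n _ => ContinuousOn.pow ?_ 2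
    exact ((hC1 n).continuous_deriv le_rfl).continuousOn.div (hC1 n).continuous.continuousOn
      fun t ht => (hpos t ht n).1.ne'
  · have ht' := Ioo_subset_Icc_self ht
    exact abs_neg_sum_log_mul_div_shannonEntropy_le _ (fun n => (hpos t ht' n).1)
      (fun n => (hpos t ht' n).2.le) (hS t ht')

/-- **Entropic lower bound on path length.**
For `d ≥ 2` and a continuously differentiable path `p : [0,1] → ℝ^d` of probability
vectors with `0 < p n t < 1`, the length of the path in the metric
`g_p(x,y) = ∑ n, x n * y n / (p n)²` is at least
`|log S(p 0) − log S(p 1)|`, where `S` is the Shannon entropy. -/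
theorem entropic_path_length_lower_bound
    (d : ℕ) (hd : 2 ≤ d) (p : ℝ → Fin d → ℝ)
    (hC1 : ∀ n, ContDiff ℝ 1 (fun t => p t n))
    (hpos : ∀ t ∈ Set.Icc (0:ℝ) 1, ∀ n, 0 < p t n ∧ p t n < 1)
    (hsum : ∀ t ∈ Set.Icc (0:ℝ) 1, ∑ n, p t n = 1) :
    ∫ t in (0:ℝ)..1,
        Real.sqrt (∑ n, (deriv (fun s => p s n) t / p t n) ^ 2) ≥
      |Real.log (shannonEntropy (p 0)) - Real.log (shannonEntropy (p 1))| :=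
  entropic_path_length_lower_bound_general d p hC1 hpos hsum
end

section
/- Let d ≥ 1 and let r ∈ ℝ^d satisfy r_n > 0 for all n and Σ_n r_n = 1. Define ℓ := √(Σ_{n=1}^d (ln(d·r_n))²), and for t ∈ [0,1] define q_n(t) := (1/d)(d·r_n)^t / Z(t), where Z(t) := Σ_{m=1}^d (1/d)(d·r_m)^t. Then the path t ↦ q(t) satisfies q_n(t) > 0, Σ_n q_n(t) = 1, q(0) = 𝟙/d, q(1) = r, and its length obeys ∫₀¹ √(Σ_{n=1}^d ((d/dt) ln q_n(t))²) dt ≤ (√d + 1)·ℓ. -/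
/-!
Writing `a n = log (d r n)`, the path `q` is the exponential tilt of the uniform weights in the
direction `a`, so `d/dt log q_n = a_n - E_{q t}[a]`. The `q t`-mean of `a` is bounded by
`max |a_n| ≤ ℓ`, and Minkowski gives `√(∑ (a_n - c)²) ≤ ℓ + √d |c|`: the integrand is bounded by
`(√d + 1) ℓ` at every time.
-/

open Real

theorem sqrt_sum_sq_sub_const_le {ι : Type*} [Fintype ι] (a : ι → ℝ) (c : ℝ) :
    √(∑ i, (a i - c) ^ 2) ≤ √(∑ i, a i ^ 2) + √(Fintype.card ι) * |c| := by
  have h := norm_sub_le (WithLp.toLp 2 a : EuclideanSpace ℝ ι) (WithLp.toLp 2 fun _ => c)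
  simp only [EuclideanSpace.norm_eq, Real.norm_eq_abs, sq_abs] at h
  simpa [Finset.sum_const, Real.sqrt_mul (Nat.cast_nonneg _), Real.sqrt_sq_eq_abs] using h

theorem abs_le_sqrt_sum_sq {ι : Type*} [Fintype ι] (a : ι → ℝ) (i : ι) :
    |a i| ≤ √(∑ j, a j ^ 2) :=
  Real.abs_le_sqrt (Finset.single_le_sum (fun j _ => sq_nonneg (a j)) (Finset.mem_univ i))

theorem abs_sum_mul_le_of_sum_eq_one {ι : Type*} [Fintype ι] {p a : ι → ℝ} {L : ℝ}
    (hp : ∀ i, 0 ≤ p i) (hp1 : ∑ i, p i = 1) (ha : ∀ i, |a i| ≤ L) :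
    |∑ i, p i * a i| ≤ L :=
  calc |∑ i, p i * a i| ≤ ∑ i, p i * |a i| := by
        simpa only [abs_mul, abs_of_nonneg (hp _)] using
          Finset.abs_sum_le_sum_abs (fun i => p i * a i) Finset.univ
    _ ≤ ∑ i, p i * L := Finset.sum_le_sum fun i _ => mul_le_mul_of_nonneg_left (ha i) (hp i)
    _ = L := by rw [← Finset.sum_mul, hp1, one_mul]

theorem sqrt_sum_sq_sub_mean_le {ι : Type*} [Fintype ι] {p : ι → ℝ}
    (hp : ∀ i, 0 ≤ p i) (hp1 : ∑ i, p i = 1) (a : ι → ℝ) :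
    √(∑ i, (a i - ∑ j, p j * a j) ^ 2) ≤ (√(Fintype.card ι) + 1) * √(∑ i, a i ^ 2) := by
  have hmean := abs_sum_mul_le_of_sum_eq_one hp hp1 (abs_le_sqrt_sum_sq a)
  calc _ ≤ √(∑ i, a i ^ 2) + √(Fintype.card ι) * |∑ j, p j * a j| :=
        sqrt_sum_sq_sub_const_le a _
    _ ≤ √(∑ i, a i ^ 2) + √(Fintype.card ι) * √(∑ i, a i ^ 2) := by gcongr
    _ = _ := by ring

section ExpTilt

variable {ι : Type*} [Fintype ι] (w a : ι → ℝ)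

noncomputable def expTilt (t : ℝ) (i : ι) : ℝ :=
  w i * exp (a i * t) / ∑ j, w j * exp (a j * t)

variable {w} [Nonempty ι]

theorem sum_weight_exp_pos (hw : ∀ i, 0 < w i) (t : ℝ) : 0 < ∑ j, w j * exp (a j * t) :=
  Finset.sum_pos (fun j _ => mul_pos (hw j) (exp_pos _)) Finset.univ_nonempty

theorem expTilt_pos (hw : ∀ i, 0 < w i) (t : ℝ) (i : ι) : 0 < expTilt w a t i :=
  div_pos (mul_pos (hw i) (exp_pos _)) (sum_weight_exp_pos a hw t)

theorem sum_expTilt (hw : ∀ i, 0 < w i) (t : ℝ) : ∑ i, expTilt w a t i = 1 := by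
  unfold expTilt
  rw [← Finset.sum_div, div_self (sum_weight_exp_pos a hw t).ne']

theorem hasDerivAt_log_expTilt (hw : ∀ i, 0 < w i) (t : ℝ) (i : ι) :
    HasDerivAt (fun s => log (expTilt w a s i)) (a i - ∑ j, expTilt w a t j * a j) t := by
  have hS : HasDerivAt (fun s => ∑ j, w j * exp (a j * s))
      (∑ j, w j * (exp (a j * t) * a j)) t :=
    HasDerivAt.fun_sum fun j _ => by
      simpa using (((hasDerivAt_id t).const_mul (a j)).exp.const_mul (w j))
  have hlog : (fun s => log (expTilt w a s i))
      = fun s => log (w i) + a i * s - log (∑ j, w j * exp (a j * s)) := by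
    funext s
    rw [expTilt, log_div (mul_pos (hw i) (exp_pos _)).ne' (sum_weight_exp_pos a hw s).ne',
      log_mul (hw i).ne' (exp_pos _).ne', log_exp]
  have hmean : (∑ j, w j * (exp (a j * t) * a j)) / ∑ j, w j * exp (a j * t)
      = ∑ j, expTilt w a t j * a j := by
    simp only [expTilt, Finset.sum_div, div_mul_eq_mul_div, mul_assoc]
  rw [hlog, ← hmean]
  exact (((hasDerivAt_id t).const_mul (a i)).const_add (log (w i))).sub
    (hS.log (sum_weight_exp_pos a hw t).ne') |>.congr_deriv (by simp)

end ExpTilt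

/-- **Upper bound via the normalized geometric interpolation.**
For a strictly positive probability vector `r`, the normalized geometric
interpolation `q t n = (1/d)(d r n)^t / Z t` between the uniform distribution and
`r` is a path of probability vectors from `𝟙/d` to `r` whose length in the
log-barrier metric is at most `(√d + 1) ℓ`, with `ℓ = √(∑ n, (log (d r n))²)`. -/
theorem geometric_interpolation_length_upper_bound
    (d : ℕ) (hd : 1 ≤ d) (r : Fin d → ℝ)
    (hr : ∀ n, 0 < r n) (hrsum : ∑ n, r n = 1)
    (Z : ℝ → ℝ)
    (hZ : ∀ t, Z t = ∑ m, (1 / (d : ℝ)) * ((d : ℝ) * r m) ^ t)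
    (q : ℝ → Fin d → ℝ)
    (hq : ∀ t n, q t n = (1 / (d : ℝ)) * ((d : ℝ) * r n) ^ t / Z t) :
    (∀ t ∈ Set.Icc (0:ℝ) 1, ∀ n, 0 < q t n) ∧
    (∀ t ∈ Set.Icc (0:ℝ) 1, ∑ n, q t n = 1) ∧
    (∀ n, q 0 n = 1 / d) ∧
    (∀ n, q 1 n = r n) ∧
    (∫ t in (0:ℝ)..1,
        Real.sqrt (∑ n, (deriv (fun s => Real.log (q s n)) t) ^ 2)) ≤
      (Real.sqrt d + 1) * Real.sqrt (∑ n, (Real.log ((d : ℝ) * r n)) ^ 2) := by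
  have : Nonempty (Fin d) := Fin.pos_iff_nonempty.mp hd
  have hd0 : (0 : ℝ) < d := by exact_mod_cast hd
  have hw : ∀ _ : Fin d, (0 : ℝ) < 1 / d := fun _ => by positivity
  set a : Fin d → ℝ := fun n => log (d * r n)
  have hq_tilt : q = expTilt (fun _ => 1 / (d : ℝ)) a := by
    funext t n
    simp only [hq, hZ, expTilt, a, rpow_def_of_pos (mul_pos hd0 (hr _))]
  have hZ0 : Z 0 = 1 := by simp [hZ, hd0.ne']
  have hZ1 : Z 1 = 1 := by simp [hZ, hd0.ne', hrsum]
  refine ⟨fun t _ n => hq_tilt ▸ expTilt_pos a hw t n, fun t _ => hq_tilt ▸ sum_expTilt a hw t,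
    fun n => by simp [hq, hZ0], fun n => by simp [hq, hZ1, hd0.ne'], ?_⟩
  subst hq_tilt
  calc _ ≤ ‖∫ t in (0:ℝ)..1, √(∑ n, (deriv (fun s => log (expTilt _ a s n)) t) ^ 2)‖ :=
        le_norm_self _
    _ ≤ (√d + 1) * √(∑ n, a n ^ 2) * |1 - 0| := by
        refine intervalIntegral.norm_integral_le_of_norm_le_const fun t _ => ?_
        simp only [norm_of_nonneg (sqrt_nonneg _), (hasDerivAt_log_expTilt a hw t _).deriv]
        simpa using sqrt_sum_sq_sub_mean_le (fun n => (expTilt_pos a hw t n).le)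
          (sum_expTilt a hw t) a
    _ = _ := by rw [sub_zero, abs_one, mul_one]
end
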